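/- arXiv:0811.2610 — 12 statements merged into one kernel-verified Lean document; each statement's English description precedes it below -/
import Mathlib

section
/- Let A be a Boolean algebra and X ⊆ A a subset such that A is ω-free over X. Then the set X \ {0} is ω-independent in A. -/
universe u v

/-- A function `f` (restricted to `X`) is ω-preserving: for every finite `H ⊆ X`
with `inf H = ⊥`, the infimum of the image is `⊥`. -/
def OmegaPreserving {α : Type u} {β : Type v} [BooleanAlgebra α] [BooleanAlgebra β]
    (X : Set α) (f : α → β) : Prop :=
  ∀ H : Finset α, ↑H ⊆ X → H.inf id = ⊥ → H.inf f = ⊥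

/-- `A` is ω-free over `X`: every ω-preserving function from `X` into any nontrivial
Boolean algebra extends to a unique Boolean algebra homomorphism. -/
def OmegaFree {α : Type u} [BooleanAlgebra α] (X : Set α) : Prop :=
  ∀ (β : Type v) [BooleanAlgebra β] [Nontrivial β] (f : α → β),
    OmegaPreserving X f → ∃! g : BoundedLatticeHom α β, ∀ x ∈ X, g x = f x

/-- `X` is ω-independent: `⊥ ∉ X`, (⊥1) no nonempty finite `F ⊆ X` has `sup F = ⊤`, and
(⊥3) if `⊥ ≠ inf F ≤ sup G` for nonempty finite `F, G ⊆ X` then `F ∩ G ≠ ∅`. -/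
def OmegaIndependent {α : Type u} [BooleanAlgebra α] (X : Set α) : Prop :=
  ⊥ ∉ X ∧
  (∀ F : Finset α, ↑F ⊆ X → F.Nonempty → F.sup id ≠ ⊤) ∧
  (∀ F G : Finset α, ↑F ⊆ X → ↑G ⊆ X → F.Nonempty → G.Nonempty →
    F.inf id ≠ ⊥ → F.inf id ≤ G.sup id → ((F : Set α) ∩ (G : Set α)).Nonempty)

/-!
Send a finite `F ⊆ X` with `inf F ≠ ⊥` to `⊤` and the rest of `X` to `⊥` in the two-element
algebra. This is ω-preserving, since a finite `H` with `inf H = ⊥` cannot lie inside `F`, so it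
extends to a homomorphism `g`. If `G ⊆ X` is disjoint from `F` then `g (inf F) = ⊤` while
`g (sup G) = ⊥`, so `inf F ≰ sup G`. Taking `F = ∅` gives (⊥1), and (⊥3) is the general case.
-/

section

variable {α : Type u} {β : Type v} [BooleanAlgebra α] [BooleanAlgebra β] [DecidableEq α]

theorem omegaPreserving_indicator (X : Set α) {F : Finset α} (hF : F.inf id ≠ ⊥) :
    OmegaPreserving X (fun a ↦ if a ∈ F then (⊤ : β) else ⊥) := by
  intro H _ hH
  obtain ⟨y, hyH, hyF⟩ : ∃ y ∈ H, y ∉ F :=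
    Finset.not_subset.mp fun hHF ↦ hF (le_bot_iff.mp (hH ▸ Finset.inf_mono hHF))
  exact le_bot_iff.mp ((Finset.inf_le hyH).trans (by simp [hyF]))

theorem not_inf_le_sup_of_omegaFree {X : Set α} (h : OmegaFree.{u, v} X) {F G : Finset α}
    (hFX : ↑F ⊆ X) (hGX : ↑G ⊆ X) (hF : F.inf id ≠ ⊥) (hFG : Disjoint F G) :
    ¬ F.inf id ≤ G.sup id := by
  intro hle
  obtain ⟨g, hg, -⟩ := h (Set PUnit.{v + 1}) _ (omegaPreserving_indicator X hF)
  have hgF : g (F.inf id) = ⊤ := by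
    rw [map_finset_inf, Finset.inf_eq_top_iff]
    intro y hy
    simp [hg y (hFX hy), hy]
  have hgG : g (G.sup id) = ⊥ := by
    rw [map_finset_sup, Finset.sup_eq_bot_iff]
    intro y hy
    simp [hg y (hGX hy), Finset.disjoint_right.mp hFG hy]
  have hmono := OrderHomClass.mono g hle
  rw [hgF, hgG] at hmono
  exact top_ne_bot (le_bot_iff.mp hmono)

end

/-- If `A` is ω-free over `X`, then `X \ {⊥}` is ω-independent. -/
theorem omegaFree_omegaIndependent {α : Type u} [BooleanAlgebra α] (X : Set α)
    (h : OmegaFree.{u, v} X) : OmegaIndependent (X \ {⊥}) := by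
  classical
  have hsub : X \ {⊥} ⊆ X := Set.sdiff_subset
  refine ⟨fun hx ↦ hx.2 rfl, ?_, ?_⟩
  · intro G hG ⟨x, hx⟩ hsup
    have : Nontrivial α := ⟨⟨x, ⊥, (hG hx).2⟩⟩
    refine not_inf_le_sup_of_omegaFree h (F := ∅) (by simp) (hG.trans hsub) ?_
      (Finset.disjoint_empty_left G) (by simp [hsup])
    simp
  · intro F G hF hG _ _ hFinf hle
    by_contra hFG
    rw [← Finset.coe_inter, Finset.coe_nonempty, Finset.not_nonempty_iff_eq_empty,
      ← Finset.disjoint_iff_inter_eq_empty] at hFG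
    exact not_inf_le_sup_of_omegaFree h (hF.trans hsub) (hG.trans hsub) hFinf hFG hle
end

section
/- Let n be a positive integer, A a Boolean algebra, and X ⊆ A a subset such that A is n-free over X. Then the set X \ {0} is n-independent in A. -/
universe u v

/-- A function `f` (restricted to `X`) is `n`-preserving: whenever `a₀, …, a_{n-1} ∈ X`
have infimum `⊥`, so do their images. -/
def NPreserving {α : Type u} {β : Type v} [BooleanAlgebra α] [BooleanAlgebra β]
    (n : ℕ) (X : Set α) (f : α → β) : Prop :=
  ∀ a : Fin n → α, (∀ i, a i ∈ X) → Finset.univ.inf a = ⊥ → Finset.univ.inf (f ∘ a) = ⊥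

/-- `A` is `n`-free over `X`: every `n`-preserving function from `X` into any nontrivial
Boolean algebra extends to a unique Boolean algebra homomorphism. -/
def NFree {α : Type u} [BooleanAlgebra α] (n : ℕ) (X : Set α) : Prop :=
  ∀ (β : Type v) [BooleanAlgebra β] [Nontrivial β] (f : α → β),
    NPreserving n X f → ∃! g : BoundedLatticeHom α β, ∀ x ∈ X, g x = f x

/-- `X` is `n`-independent: `⊥ ∉ X`, (⊥1) no nonempty finite `F ⊆ X` has `sup F = ⊤`,
(⊥2ₙ) any nonempty finite `F ⊆ X` with `inf F = ⊥` has a subset of size `≤ n` with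
infimum `⊥`, and (⊥3) if `⊥ ≠ inf F ≤ sup G` then `F ∩ G ≠ ∅`. -/
def NIndependent {α : Type u} [BooleanAlgebra α] (n : ℕ) (X : Set α) : Prop :=
  ⊥ ∉ X ∧
  (∀ F : Finset α, ↑F ⊆ X → F.Nonempty → F.sup id ≠ ⊤) ∧
  (∀ F : Finset α, ↑F ⊆ X → F.Nonempty → F.inf id = ⊥ →
    ∃ F' ⊆ F, F'.card ≤ n ∧ F'.inf id = ⊥) ∧
  (∀ F G : Finset α, ↑F ⊆ X → ↑G ⊆ X → F.Nonempty → G.Nonempty →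
    F.inf id ≠ ⊥ → F.inf id ≤ G.sup id → ((F : Set α) ∩ (G : Set α)).Nonempty)

/-- If `n` is a positive integer and `A` is `n`-free over `X`, then `X \ {⊥}` is
`n`-independent. -/
theorem nFree_nIndependent {α : Type u} [BooleanAlgebra α] (n : ℕ) (hn : 0 < n) (X : Set α)
    (h : NFree.{u, v} n X) : NIndependent n (X \ {⊥}) := by
  classical
  haveI : NeZero n := ⟨hn.ne'⟩
  refine ⟨fun hb => hb.2 rfl, ?_, ?_, ?_⟩
  · -- (⊥1)
    intro F hF hFne hFtop
    obtain ⟨g, hg, -⟩ := h (Set PUnit.{v+1}) (fun _ => ⊥) (by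
      intro a ha h0
      simpa using Finset.inf_const (Finset.univ_nonempty (α := Fin n)) (⊥ : Set PUnit.{v+1}))
    have h1 : g (F.sup id) = ⊥ := by
      rw [map_finset_sup]
      refine le_bot_iff.mp (Finset.sup_le fun x hx => ?_)
      rw [Function.comp, id, hg x (hF hx).1]
    rw [hFtop, map_top] at h1
    exact top_ne_bot h1
  · -- (⊥2ₙ)
    intro F hF hFne hFinf
    by_contra hc
    push_neg at hc
    set f : α → Set PUnit.{v+1} := fun x => if x ∈ F then ⊤ else ⊥ with hf
    have hpres : NPreserving n X f := by
      intro a ha h0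
      by_cases hall : ∀ i, a i ∈ F
      · exfalso
        refine hc (Finset.univ.image a) (fun x hx => ?_)
          ((Finset.card_image_le).trans (by simp)) ?_
        · obtain ⟨i, -, rfl⟩ := Finset.mem_image.mp hx
          exact hall i
        · rw [Finset.inf_image]
          simpa using h0
      · push_neg at hall
        obtain ⟨i, hi⟩ := hall
        refine le_bot_iff.mp ((Finset.inf_le (Finset.mem_univ i)).trans ?_)
        simp [hf, hi]
    obtain ⟨g, hg, -⟩ := h (Set PUnit.{v+1}) f hpres
    have h1 : g (F.inf id) = ⊤ := by
      rw [map_finset_inf]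
      refine top_le_iff.mp (Finset.le_inf fun x hx => ?_)
      rw [Function.comp, id, hg x (hF hx).1]
      simp [hf, hx]
    rw [hFinf, map_bot] at h1
    exact top_ne_bot h1.symm
  · -- (⊥3)
    intro F G hF hG hFne hGne hF0 hle
    by_contra hc
    rw [Set.not_nonempty_iff_eq_empty] at hc
    set f : α → Set PUnit.{v+1} := fun x => if x ∈ F then ⊤ else ⊥ with hf
    have hpres : NPreserving n X f := by
      intro a ha h0
      by_cases hall : ∀ i, a i ∈ F
      · exfalso
        apply hF0
        refine le_bot_iff.mp (le_trans ?_ h0.le)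
        refine Finset.le_inf fun i _ => ?_
        exact Finset.inf_le (hall i)
      · push_neg at hall
        obtain ⟨i, hi⟩ := hall
        refine le_bot_iff.mp ((Finset.inf_le (Finset.mem_univ i)).trans ?_)
        simp [hf, hi]
    obtain ⟨g, hg, -⟩ := h (Set PUnit.{v+1}) f hpres
    have h1 : g (F.inf id) = ⊤ := by
      rw [map_finset_inf]
      refine top_le_iff.mp (Finset.le_inf fun x hx => ?_)
      rw [Function.comp, id, hg x (hF hx).1]
      simp [hf, hx]
    have h2 : g (G.sup id) = ⊥ := by
      rw [map_finset_sup]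
      refine le_bot_iff.mp (Finset.sup_le fun x hx => ?_)
      have hxF : x ∉ F := fun hxF => by
        have : x ∈ (F : Set α) ∩ (G : Set α) := ⟨hxF, hx⟩
        simp [hc] at this
      rw [Function.comp, id, hg x (hG hx).1]
      simp [hf, hxF]
    have := OrderHomClass.mono g hle
    rw [h1, h2] at this
    exact top_ne_bot (top_le_iff.mp (this.trans bot_le)).symm
end

section
/- Let A be a Boolean algebra generated by an ω-independent subset X ⊆ A. Then A is ω-free over X: every ω-preserving function from X into any nontrivial Boolean algebra B extends to a unique Boolean algebra homomorphism from A to B. -/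
universe u v

/-- The elements of the Boolean subalgebra generated by `X`. -/
inductive InSubalgebra {α : Type u} [BooleanAlgebra α] (X : Set α) : α → Prop
  | base {a : α} : a ∈ X → InSubalgebra X a
  | bot : InSubalgebra X ⊥
  | top : InSubalgebra X ⊤
  | compl {a : α} : InSubalgebra X a → InSubalgebra X aᶜ
  | sup {a b : α} : InSubalgebra X a → InSubalgebra X b → InSubalgebra X (a ⊔ b)
  | inf {a b : α} : InSubalgebra X a → InSubalgebra X b → InSubalgebra X (a ⊓ b)

/-- `X` generates `A`: the smallest Boolean subalgebra of `A` containing `X` is `A`. -/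
def Generates {α : Type u} [BooleanAlgebra α] (X : Set α) : Prop :=
  ∀ a : α, InSubalgebra X a


set_option linter.unusedSectionVars false
set_option linter.unusedVariables false

section DNF

variable {α : Type u} {β : Type v} [BooleanAlgebra α] [BooleanAlgebra β]

/-- Value of a cube (positive literals, negative literals) under a literal map `u`. -/
def cubeVal (u : α → β) (c : Finset α × Finset α) : β :=
  c.1.inf u ⊓ c.2.inf (fun x => (u x)ᶜ)

/-- Value of a DNF (finite set of cubes). -/
def dnfVal (u : α → β) (D : Finset (Finset α × Finset α)) : β := D.sup (cubeVal u)

lemma cubeVal_mono (u : α → β) {c d : Finset α × Finset α} (h1 : c.1 ⊆ d.1) (h2 : c.2 ⊆ d.2) :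
    cubeVal u d ≤ cubeVal u c :=
  inf_le_inf (Finset.inf_mono h1) (Finset.inf_mono h2)

lemma cubeVal_conflict (u : α → β) {c d : Finset α × Finset α} {y : α}
    (hy1 : y ∈ c.1) (hy2 : y ∈ d.2) : cubeVal u c ⊓ cubeVal u d = ⊥ := by
  have h1 : cubeVal u c ≤ u y := le_trans inf_le_left (Finset.inf_le hy1)
  have h2 : cubeVal u d ≤ (u y)ᶜ := le_trans inf_le_right (Finset.inf_le hy2)
  exact le_bot_iff.mp (le_trans (inf_le_inf h1 h2) inf_compl_eq_bot.le)

/-- Partition of unity: the minterms over `Y` sup to `⊤`. -/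
lemma sup_mint [DecidableEq α] (u : α → β) (Y : Finset α) :
    Y.powerset.sup (fun S => cubeVal u (S, Y \ S)) = ⊤ := by
  induction Y using Finset.induction_on with
  | empty => simp [cubeVal]
  | @insert a Y ha ih =>
    rw [Finset.powerset_insert, Finset.sup_union, Finset.sup_image, ← Finset.sup_sup]
    rw [Finset.sup_congr rfl ?_, ih]
    intro S hS
    rw [Finset.mem_powerset] at hS
    have haS : a ∉ S := fun h => ha (hS h)
    have e1 : insert a Y \ S = insert a (Y \ S) := by
      ext x
      simp only [Finset.mem_sdiff, Finset.mem_insert]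
      constructor
      · rintro ⟨h | h, h2⟩
        · exact Or.inl h
        · exact Or.inr ⟨h, h2⟩
      · rintro (rfl | ⟨h, h2⟩)
        · exact ⟨Or.inl rfl, haS⟩
        · exact ⟨Or.inr h, h2⟩
    have e2 : insert a Y \ insert a S = Y \ S := by
      ext x
      simp only [Finset.mem_sdiff, Finset.mem_insert]
      constructor
      · rintro ⟨h | h, h2⟩
        · exact absurd (Or.inl h) h2
        · exact ⟨h, fun hx => h2 (Or.inr hx)⟩
      · rintro ⟨h, h2⟩
        exact ⟨Or.inr h, fun hx => by rcases hx with rfl | hx; exact ha h; exact h2 hx⟩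
    simp only [Pi.sup_apply, Function.comp_apply, e1, e2, cubeVal, Finset.inf_insert, id]
    rw [inf_left_comm, inf_assoc (u a), ← inf_sup_right, compl_sup_eq_top, top_inf_eq]

/-- Dichotomy: a minterm is either below a cube's value or disjoint from it. -/
lemma mint_dichotomy [DecidableEq α] (u : α → β) {Y S : Finset α} (hS : S ⊆ Y)
    {c : Finset α × Finset α} (h1 : c.1 ⊆ Y) (h2 : c.2 ⊆ Y) :
    (c.1 ⊆ S ∧ c.2 ∩ S = ∅ ∧ cubeVal u (S, Y \ S) ≤ cubeVal u c) ∨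
      cubeVal u (S, Y \ S) ⊓ cubeVal u c = ⊥ := by
  by_cases hc1 : c.1 ⊆ S
  · by_cases hc2 : c.2 ∩ S = ∅
    · left
      refine ⟨hc1, hc2, cubeVal_mono u hc1 (Finset.subset_sdiff.mpr ⟨h2, ?_⟩)⟩
      exact Finset.disjoint_iff_inter_eq_empty.mpr hc2
    · right
      obtain ⟨y, hy⟩ := Finset.nonempty_iff_ne_empty.mpr hc2
      rw [Finset.mem_inter] at hy
      exact cubeVal_conflict u (c := (S, Y \ S)) (show y ∈ S from hy.2) hy.1
  · right
    obtain ⟨y, hy1, hy2⟩ := Finset.not_subset.mp hc1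
    have hyY : y ∈ Y \ S := Finset.mem_sdiff.mpr ⟨h1 hy1, hy2⟩
    rw [inf_comm]
    exact cubeVal_conflict u hy1 hyY


/-- Expansion of a cube into minterms over `Y`. -/
lemma cube_expand [DecidableEq α] (u : α → β) {Y : Finset α} {c : Finset α × Finset α}
    (h1 : c.1 ⊆ Y) (h2 : c.2 ⊆ Y) :
    cubeVal u c = (Y.powerset.filter (fun S => c.1 ⊆ S ∧ c.2 ∩ S = ∅)).sup
      (fun S => cubeVal u (S, Y \ S)) := by
  apply le_antisymm
  · conv_lhs => rw [← inf_top_eq (cubeVal u c), ← sup_mint u Y]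
    rw [Finset.sup_inf_distrib_left]
    apply Finset.sup_le
    intro S hS
    rw [Finset.mem_powerset] at hS
    rcases mint_dichotomy u hS h1 h2 with ⟨hc1, hc2, _⟩ | hbot
    · refine le_trans inf_le_right (Finset.le_sup (f := fun S => cubeVal u (S, Y \ S)) ?_)
      exact Finset.mem_filter.mpr ⟨Finset.mem_powerset.mpr hS, hc1, hc2⟩
    · rw [inf_comm, hbot]; exact bot_le
  · apply Finset.sup_le
    intro S hS
    simp only [Finset.mem_filter, Finset.mem_powerset] at hS
    exact cubeVal_mono u hS.2.1
      (Finset.subset_sdiff.mpr ⟨h2, Finset.disjoint_iff_inter_eq_empty.mpr hS.2.2⟩)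

/-- The Sikorski-type condition derived from ω-independence and ω-preservation. -/
lemma sik {X : Set α} (hind : OmegaIndependent X) {f : α → β} (hf : OmegaPreserving X f)
    {S N : Finset α} (hS : ↑S ⊆ X) (hN : ↑N ⊆ X)
    (h : cubeVal id (S, N) = ⊥) : cubeVal f (S, N) = ⊥ := by
  classical
  have hNc : ∀ (M : Finset α), M.inf (fun x : α => (id x)ᶜ) = (M.sup id)ᶜ := by
    intro M
    induction M using Finset.induction_on with
    | empty => simp
    | @insert a M ha ih => simp [Finset.inf_insert, Finset.sup_insert, ih, compl_sup]
  by_cases hSN : (S ∩ N).Nonempty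
  · obtain ⟨y, hy⟩ := hSN
    rw [Finset.mem_inter] at hy
    have := cubeVal_conflict f (c := (S, N)) (d := (S, N)) hy.1 hy.2
    rwa [inf_idem] at this
  · have hle : S.inf id ≤ N.sup id := by
      unfold cubeVal at h
      simp only at h
      rw [hNc N, ← sdiff_eq] at h
      exact sdiff_eq_bot_iff.mp h
    rcases S.eq_empty_or_nonempty with rfl | hSne
    · simp only [Finset.inf_empty, top_le_iff] at hle
      rcases N.eq_empty_or_nonempty with rfl | hNne
      · -- α is trivial; then β collapses via hf on ∅
        simp only [Finset.sup_empty] at hle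
        have hβ : (⊤ : β) = ⊥ := by
          have := hf ∅ (by simp) (by simp [hle.symm])
          simpa using this
        exact le_bot_iff.mp (le_top.trans hβ.le)
      · exact absurd hle (hind.2.1 N hN hNne)
    · by_cases hSbot : S.inf id = ⊥
      · have hfS := hf S hS hSbot
        unfold cubeVal
        exact le_bot_iff.mp (le_trans inf_le_left hfS.le)
      · rcases N.eq_empty_or_nonempty with rfl | hNne
        · simp only [Finset.sup_empty, le_bot_iff] at hle
          exact absurd hle hSbot
        · obtain ⟨y, hy1, hy2⟩ := hind.2.2 S N hS hN hSne hNne hSbot hle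
          exact absurd (⟨y, Finset.mem_inter.mpr ⟨hy1, hy2⟩⟩ : (S ∩ N).Nonempty) hSN

/-- Key well-definedness lemma: `dnfVal f` is monotone along `dnfVal id`. -/
lemma dnf_mono {X : Set α} (hind : OmegaIndependent X) {f : α → β}
    (hf : OmegaPreserving X f) (D D' : Finset (Finset α × Finset α))
    (hD : ∀ c ∈ D, ↑c.1 ⊆ X ∧ ↑c.2 ⊆ X) (hD' : ∀ c ∈ D', ↑c.1 ⊆ X ∧ ↑c.2 ⊆ X)
    (hle : dnfVal id D ≤ dnfVal id D') : dnfVal f D ≤ dnfVal f D' := by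
  classical
  set Y : Finset α := (D ∪ D').sup (fun c => c.1 ∪ c.2) with hY
  have hsub : ∀ c ∈ D ∪ D', c.1 ⊆ Y ∧ c.2 ⊆ Y := by
    intro c hc
    constructor <;> intro x hx <;> rw [hY] <;> rw [Finset.mem_sup] <;>
      exact ⟨c, hc, by simp [hx]⟩
  have hYX : ↑Y ⊆ X := by
    intro x hx
    rw [Finset.mem_coe, hY, Finset.mem_sup] at hx
    obtain ⟨c, hc, hxc⟩ := hx
    have hcX : ↑c.1 ⊆ X ∧ ↑c.2 ⊆ X := by
      rcases Finset.mem_union.mp hc with h | h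
      · exact hD c h
      · exact hD' c h
    rcases Finset.mem_union.mp hxc with h | h
    · exact hcX.1 h
    · exact hcX.2 h
  apply Finset.sup_le
  intro c hc
  have hcY := hsub c (Finset.mem_union_left _ hc)
  rw [show cubeVal f c = _ from cube_expand f hcY.1 hcY.2]
  apply Finset.sup_le
  intro S hS
  simp only [Finset.mem_filter, Finset.mem_powerset] at hS
  obtain ⟨hSY, hc1S, hc2S⟩ := hS
  have hSX : ↑S ⊆ X := fun x hx => hYX (hSY hx)
  have hYSX : ↑(Y \ S) ⊆ X := fun x hx => hYX (Finset.mem_sdiff.mp hx).1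
  by_cases hm : cubeVal id (S, Y \ S) = ⊥
  · rw [sik hind hf hSX hYSX hm]; exact bot_le
  · have hmc : cubeVal id (S, Y \ S) ≤ cubeVal id c :=
      cubeVal_mono id hc1S (Finset.subset_sdiff.mpr
        ⟨hcY.2, Finset.disjoint_iff_inter_eq_empty.mpr hc2S⟩)
    have h1 : cubeVal id (S, Y \ S) ≤ dnfVal id D' :=
      le_trans hmc (le_trans (Finset.le_sup hc) hle)
    have h3 : ∃ c' ∈ D', cubeVal id (S, Y \ S) ⊓ cubeVal id c' ≠ ⊥ := by
      by_contra hcon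
      push_neg at hcon
      apply hm
      have h2 : cubeVal id (S, Y \ S) = D'.sup
          (fun c' => cubeVal id (S, Y \ S) ⊓ cubeVal id c') := by
        rw [← Finset.sup_inf_distrib_left]
        exact (inf_eq_left.mpr h1).symm
      rw [h2]
      exact (Finset.sup_eq_bot_iff _ _).mpr hcon
    obtain ⟨c', hc', hne⟩ := h3
    have hc'Y := hsub c' (Finset.mem_union_right _ hc')
    rcases mint_dichotomy id hSY hc'Y.1 hc'Y.2 with ⟨h1', h2', _⟩ | hbot
    · refine le_trans (cubeVal_mono f h1' ?_) (Finset.le_sup hc')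
      exact Finset.subset_sdiff.mpr ⟨hc'Y.2, Finset.disjoint_iff_inter_eq_empty.mpr h2'⟩
    · exact absurd hbot hne

lemma dnfVal_merge [DecidableEq α] (u : α → β) (D₁ D₂ : Finset (Finset α × Finset α)) :
    dnfVal u ((D₁ ×ˢ D₂).image (fun p => (p.1.1 ∪ p.2.1, p.1.2 ∪ p.2.2))) =
      dnfVal u D₁ ⊓ dnfVal u D₂ := by
  unfold dnfVal
  rw [Finset.sup_image, Finset.sup_inf_sup]
  apply Finset.sup_congr rfl
  intro p _
  simp only [Function.comp_apply, cubeVal, Finset.inf_union]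
  exact (inf_inf_inf_comm _ _ _ _).symm

lemma dnf_compl [DecidableEq α] {X : Set α} (D : Finset (Finset α × Finset α))
    (hD : ∀ c ∈ D, ↑c.1 ⊆ X ∧ ↑c.2 ⊆ X) :
    ∃ D' : Finset (Finset α × Finset α), (∀ c ∈ D', ↑c.1 ⊆ X ∧ ↑c.2 ⊆ X) ∧
      dnfVal (id : α → α) D' = (dnfVal id D)ᶜ := by
  set a := dnfVal (id : α → α) D with ha
  set Y : Finset α := D.sup (fun c => c.1 ∪ c.2) with hY
  have hsub : ∀ c ∈ D, c.1 ⊆ Y ∧ c.2 ⊆ Y := by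
    intro c hc
    constructor <;> intro x hx <;> rw [hY] <;> rw [Finset.mem_sup] <;>
      exact ⟨c, hc, by simp [hx]⟩
  have hYX : ↑Y ⊆ X := by
    intro x hx
    rw [Finset.mem_coe, hY, Finset.mem_sup] at hx
    obtain ⟨c, hc, hxc⟩ := hx
    rcases Finset.mem_union.mp hxc with h | h
    · exact (hD c hc).1 h
    · exact (hD c hc).2 h
  set T : Finset (Finset α) :=
    Y.powerset.filter (fun S => cubeVal id (S, Y \ S) ⊓ a = ⊥) with hT
  refine ⟨T.image (fun S => (S, Y \ S)), ?_, ?_⟩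
  · intro c hc
    rw [Finset.mem_image] at hc
    obtain ⟨S, hS, rfl⟩ := hc
    rw [hT, Finset.mem_filter, Finset.mem_powerset] at hS
    exact ⟨fun x hx => hYX (hS.1 hx), fun x hx => hYX (Finset.mem_sdiff.mp hx).1⟩
  · have hval : dnfVal (id : α → α) (T.image (fun S => (S, Y \ S))) =
        T.sup (fun S => cubeVal id (S, Y \ S)) := by
      unfold dnfVal
      rw [Finset.sup_image]
      rfl
    rw [hval]
    have hinf : a ⊓ T.sup (fun S => cubeVal id (S, Y \ S)) = ⊥ := by
      rw [Finset.sup_inf_distrib_left]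
      apply (Finset.sup_eq_bot_iff _ _).mpr
      intro S hS
      rw [hT, Finset.mem_filter] at hS
      rw [inf_comm]
      exact hS.2
    have hsup : a ⊔ T.sup (fun S => cubeVal id (S, Y \ S)) = ⊤ := by
      apply le_antisymm le_top
      rw [← sup_mint (id : α → α) Y]
      apply Finset.sup_le
      intro S hS
      rw [Finset.mem_powerset] at hS
      by_cases hb : cubeVal id (S, Y \ S) ⊓ a = ⊥
      · refine le_trans ?_ le_sup_right
        refine Finset.le_sup (f := fun S => cubeVal (id : α → α) (S, Y \ S)) ?_
        rw [hT, Finset.mem_filter, Finset.mem_powerset]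
        exact ⟨hS, hb⟩
      · refine le_trans ?_ le_sup_left
        -- show cubeVal id (S, Y \ S) ≤ a
        have h2 : cubeVal (id : α → α) (S, Y \ S) ⊓ a =
            D.sup (fun c => cubeVal id (S, Y \ S) ⊓ cubeVal id c) := by
          rw [ha]; unfold dnfVal; rw [← Finset.sup_inf_distrib_left]
        have h3 : ∃ c ∈ D, cubeVal (id : α → α) (S, Y \ S) ⊓ cubeVal id c ≠ ⊥ := by
          by_contra hcon
          push_neg at hcon
          exact hb (h2.trans ((Finset.sup_eq_bot_iff _ _).mpr hcon))
        obtain ⟨c, hc, hne⟩ := h3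
        rcases mint_dichotomy (id : α → α) hS (hsub c hc).1 (hsub c hc).2 with
          ⟨_, _, hle⟩ | hbot
        · exact le_trans hle (Finset.le_sup hc)
        · exact absurd hbot hne
    exact ((IsCompl.of_eq hinf hsup).compl_eq).symm

lemma exists_dnf [DecidableEq α] {X : Set α} {a : α} (ha : InSubalgebra X a) :
    ∃ D : Finset (Finset α × Finset α),
      (∀ c ∈ D, ↑c.1 ⊆ X ∧ ↑c.2 ⊆ X) ∧ dnfVal id D = a := by
  induction ha with
  | @base x hx =>
    refine ⟨{({x}, ∅)}, ?_, ?_⟩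
    · intro c hc
      rw [Finset.mem_singleton] at hc
      subst hc
      simp [hx]
    · simp [dnfVal, cubeVal]
  | bot => exact ⟨∅, by simp, by simp [dnfVal]⟩
  | top =>
    refine ⟨{(∅, ∅)}, ?_, ?_⟩
    · intro c hc
      rw [Finset.mem_singleton] at hc
      subst hc
      simp
    · simp [dnfVal, cubeVal]
  | compl h ih =>
    obtain ⟨D, hD, hval⟩ := ih
    obtain ⟨D', h1, h2⟩ := dnf_compl D hD
    exact ⟨D', h1, by rw [h2, hval]⟩
  | sup h1 h2 ih1 ih2 =>
    obtain ⟨D1, hD1, hv1⟩ := ih1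
    obtain ⟨D2, hD2, hv2⟩ := ih2
    refine ⟨D1 ∪ D2, ?_, ?_⟩
    · intro c hc
      rcases Finset.mem_union.mp hc with h | h
      · exact hD1 c h
      · exact hD2 c h
    · unfold dnfVal
      rw [Finset.sup_union]
      rw [← hv1, ← hv2]
      rfl
  | inf h1 h2 ih1 ih2 =>
    obtain ⟨D1, hD1, hv1⟩ := ih1
    obtain ⟨D2, hD2, hv2⟩ := ih2
    refine ⟨(D1 ×ˢ D2).image (fun p => (p.1.1 ∪ p.2.1, p.1.2 ∪ p.2.2)), ?_, ?_⟩
    · intro c hc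
      rw [Finset.mem_image] at hc
      obtain ⟨p, hp, rfl⟩ := hc
      rw [Finset.mem_product] at hp
      constructor
      · intro x hx
        rcases Finset.mem_union.mp hx with h | h
        · exact (hD1 p.1 hp.1).1 h
        · exact (hD2 p.2 hp.2).1 h
      · intro x hx
        rcases Finset.mem_union.mp hx with h | h
        · exact (hD1 p.1 hp.1).2 h
        · exact (hD2 p.2 hp.2).2 h
    · rw [dnfVal_merge, hv1, hv2]

end DNF
/-- If `A` is generated by an ω-independent set `X`, then `A` is ω-free over `X`:
every ω-preserving `f : X → B` into a nontrivial Boolean algebra `B` extends to a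
unique Boolean algebra homomorphism. -/
theorem omegaIndependent_generates_omegaFree {α : Type u} [BooleanAlgebra α] (X : Set α)
    (hind : OmegaIndependent X) (hgen : Generates X)
    (β : Type v) [BooleanAlgebra β] [Nontrivial β] (f : α → β)
    (hf : OmegaPreserving X f) :
    ∃! g : BoundedLatticeHom α β, ∀ x ∈ X, g x = f x := by
  classical
  -- The extension relation: `a` and `b` have a common DNF over `X`.
  let Rel : α → β → Prop := fun a b => ∃ D : Finset (Finset α × Finset α),
    (∀ c ∈ D, ↑c.1 ⊆ X ∧ ↑c.2 ⊆ X) ∧ dnfVal id D = a ∧ dnfVal f D = b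
  have uniq : ∀ a b b', Rel a b → Rel a b' → b = b' := by
    rintro a b b' ⟨D, hD, hi, hv⟩ ⟨D', hD', hi', hv'⟩
    rw [← hv, ← hv']
    exact le_antisymm
      (dnf_mono hind hf D D' hD hD' (by rw [hi, hi']))
      (dnf_mono hind hf D' D hD' hD (by rw [hi, hi']))
  have total : ∀ a : α, ∃ b, Rel a b := by
    intro a
    obtain ⟨D, hD, hi⟩ := exists_dnf (hgen a)
    exact ⟨dnfVal f D, D, hD, hi, rfl⟩
  choose g hg using total
  have g_base : ∀ x ∈ X, g x = f x := by
    intro x hx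
    refine uniq x _ _ (hg x) ⟨{({x}, ∅)}, ?_, ?_, ?_⟩
    · intro c hc
      rw [Finset.mem_singleton] at hc
      subst hc
      simp [hx]
    · simp [dnfVal, cubeVal]
    · simp [dnfVal, cubeVal]
  have g_bot : g ⊥ = ⊥ :=
    uniq ⊥ _ _ (hg ⊥) ⟨∅, by simp, by simp [dnfVal], by simp [dnfVal]⟩
  have g_top : g ⊤ = ⊤ := by
    refine uniq ⊤ _ _ (hg ⊤) ⟨{(∅, ∅)}, ?_, ?_, ?_⟩
    · intro c hc
      rw [Finset.mem_singleton] at hc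
      subst hc
      simp
    · simp [dnfVal, cubeVal]
    · simp [dnfVal, cubeVal]
  have g_sup : ∀ a b : α, g (a ⊔ b) = g a ⊔ g b := by
    intro a b
    obtain ⟨D1, hD1, hi1, hv1⟩ := hg a
    obtain ⟨D2, hD2, hi2, hv2⟩ := hg b
    refine uniq (a ⊔ b) _ _ (hg (a ⊔ b)) ⟨D1 ∪ D2, ?_, ?_, ?_⟩
    · intro c hc
      rcases Finset.mem_union.mp hc with h | h
      · exact hD1 c h
      · exact hD2 c h
    · show (D1 ∪ D2).sup (cubeVal id) = a ⊔ b
      rw [Finset.sup_union, ← hi1, ← hi2]; rfl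
    · show (D1 ∪ D2).sup (cubeVal f) = g a ⊔ g b
      rw [Finset.sup_union, ← hv1, ← hv2]; rfl
  have g_inf : ∀ a b : α, g (a ⊓ b) = g a ⊓ g b := by
    intro a b
    obtain ⟨D1, hD1, hi1, hv1⟩ := hg a
    obtain ⟨D2, hD2, hi2, hv2⟩ := hg b
    refine uniq (a ⊓ b) _ _ (hg (a ⊓ b))
      ⟨(D1 ×ˢ D2).image (fun p => (p.1.1 ∪ p.2.1, p.1.2 ∪ p.2.2)), ?_, ?_, ?_⟩
    · intro c hc
      rw [Finset.mem_image] at hc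
      obtain ⟨p, hp, rfl⟩ := hc
      rw [Finset.mem_product] at hp
      constructor
      · intro x hx
        rcases Finset.mem_union.mp hx with h | h
        · exact (hD1 p.1 hp.1).1 h
        · exact (hD2 p.2 hp.2).1 h
      · intro x hx
        rcases Finset.mem_union.mp hx with h | h
        · exact (hD1 p.1 hp.1).2 h
        · exact (hD2 p.2 hp.2).2 h
    · rw [dnfVal_merge, hi1, hi2]
    · rw [dnfVal_merge, hv1, hv2]
  have g_compl : ∀ a : α, g aᶜ = (g a)ᶜ := by
    intro a
    have h1 : g a ⊓ g aᶜ = ⊥ := by rw [← g_inf, inf_compl_eq_bot, g_bot]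
    have h2 : g a ⊔ g aᶜ = ⊤ := by rw [← g_sup, sup_compl_eq_top, g_top]
    exact ((IsCompl.of_eq h1 h2).compl_eq).symm
  refine ⟨⟨⟨⟨g, g_sup⟩, g_inf⟩, g_top, g_bot⟩, g_base, ?_⟩
  intro g' hg'
  have hkey : ∀ a : α, InSubalgebra X a → g' a = g a := by
    intro a ha
    induction ha with
    | @base x hx => rw [hg' x hx, g_base x hx]
    | bot => rw [map_bot, g_bot]
    | top => rw [map_top, g_top]
    | @compl a h ih =>
      have h1 : g' a ⊓ g' aᶜ = ⊥ := by rw [← map_inf, inf_compl_eq_bot, map_bot]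
      have h2 : g' a ⊔ g' aᶜ = ⊤ := by rw [← map_sup, sup_compl_eq_top, map_top]
      have hc : g' aᶜ = (g' a)ᶜ := ((IsCompl.of_eq h1 h2).compl_eq).symm
      rw [hc, ih, ← g_compl]
    | @sup a b h1 h2 ih1 ih2 => rw [map_sup, ih1, ih2, ← g_sup]
    | @inf a b h1 h2 ih1 ih2 => rw [map_inf, ih1, ih2, ← g_inf]
  apply BoundedLatticeHom.ext
  intro a
  exact hkey a (hgen a)
end

section
/- Let A be a Boolean algebra that is ω-free over G ⊆ A, and let H be the subset of A consisting of 0, 1, and all infima of nonempty finite subsets of G. Then for every subset M ⊆ H \ {0}, there exists a Boolean algebra homomorphism f from A into the powerset Boolean algebra of M such that f(h) = {m ∈ M : m ≤ h} for every h ∈ H. (Consequently every ω-free Boolean algebra is a semigroup algebra.) -/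
universe u v

/-!
The map `a ↦ {m ∈ M | m ≤ a}` preserves finite infima, and it sends `⊥` to `∅` because `⊥ ∉ M`.
Hence it is ω-preserving on `G`, and ω-freeness extends its restriction to `G` to a homomorphism
`g`. Both `g` and the map preserve finite infima, so they agree on every finite infimum of
elements of `G` (the empty one being `⊤`), hence on all of `H`. If `M = ∅` the powerset algebra
is trivial and any homomorphism will do.
-/

section

variable {α : Type u} {β : Type v} [BooleanAlgebra α] [BooleanAlgebra β]

theorem InfTopHom.omegaPreserving (f : InfTopHom α β) (hf : f ⊥ = ⊥) (X : Set α) :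
    OmegaPreserving X f := by
  intro F _ hF
  rw [← hf, ← hF, map_finset_inf]
  rfl

def BoundedLatticeHom.toSubsingleton [Subsingleton β] : BoundedLatticeHom α β where
  toFun _ := ⊥
  map_sup' _ _ := Subsingleton.elim _ _
  map_inf' _ _ := Subsingleton.elim _ _
  map_top' := Subsingleton.elim _ _
  map_bot' := Subsingleton.elim _ _

theorem OmegaFree.exists_eq_on_finset_inf {G : Set α} (hfree : OmegaFree.{u, v} G)
    (f : InfTopHom α β) (hf : f ⊥ = ⊥) :
    ∃ g : BoundedLatticeHom α β, ∀ F : Finset α, ↑F ⊆ G → g (F.inf id) = f (F.inf id) := by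
  rcases subsingleton_or_nontrivial β with hβ | hβ
  · exact ⟨.toSubsingleton, fun _ _ => Subsingleton.elim _ _⟩
  obtain ⟨g, hg, -⟩ := hfree β f (f.omegaPreserving hf G)
  refine ⟨g, fun F hF => ?_⟩
  rw [map_finset_inf, map_finset_inf]
  exact Finset.inf_congr rfl fun x hx => hg x (hF hx)

end

section

variable {α : Type u} [SemilatticeInf α] [OrderTop α]

def InfTopHom.setOfLE (M : Set α) : InfTopHom α (Set M) where
  toFun a := {m | (m : α) ≤ a}
  map_inf' a b := by ext; simp
  map_top' := by ext; simp

theorem InfTopHom.setOfLE_bot [OrderBot α] {M : Set α} (hM : ⊥ ∉ M) : setOfLE M ⊥ = ⊥ :=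
  Set.eq_empty_of_forall_notMem fun m hm => hM (le_bot_iff.mp hm ▸ m.2)

end

/-- Let `A` be ω-free over `G`, and let `H` consist of `⊥`, `⊤`, and all infima of
nonempty finite subsets of `G`.  Then for every `M ⊆ H \ {⊥}` there is a Boolean
algebra homomorphism `f` from `A` to the powerset algebra of `M` with
`f h = {m ∈ M : m ≤ h}` for all `h ∈ H`. -/
theorem omegaFree_semigroupAlgebra {α : Type u} [BooleanAlgebra α] (G : Set α)
    (hfree : OmegaFree.{u, u} G)
    (H : Set α)
    (hH : H = {⊥, ⊤} ∪ {a : α | ∃ F : Finset α, ↑F ⊆ G ∧ F.Nonempty ∧ a = F.inf id})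
    (M : Set α) (hM : M ⊆ H \ {⊥}) :
    ∃ f : BoundedLatticeHom α (Set ↥M),
      ∀ h ∈ H, f h = {m : ↥M | (m : α) ≤ h} := by
  have hbot : InfTopHom.setOfLE M ⊥ = ⊥ := InfTopHom.setOfLE_bot fun h => (hM h).2 rfl
  obtain ⟨g, hg⟩ := hfree.exists_eq_on_finset_inf _ hbot
  refine ⟨g, fun h hh => ?_⟩
  rw [hH] at hh
  obtain (rfl | rfl) | ⟨F, hFG, -, rfl⟩ := hh
  · exact (map_bot g).trans hbot.symm
  · exact hg ∅ (by simp)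
  · exact hg F hFG
end

section
/- Let n be a positive integer, A a nontrivial Boolean algebra, and X ⊆ A \ {0}. Then X is n-independent if and only if for every finite R ⊆ X and every function ε : R → {0,1}, if the elementary product ∏_{x ∈ R} x^{ε(x)} = 0 (where x¹ = x and x⁰ = xᶜ), then there exists R' ⊆ {x ∈ R : ε(x) = 1} with |R'| ≤ n and inf R' = 0. -/
universe u

/-!
Split an elementary product by the sign `ε`: it vanishes iff the meet of its positive factors
lies below the join of its negative ones. So the elementary-product condition says that whenever
`inf F ≤ sup G` for disjoint finite `F, G ⊆ X`, at most `n` elements of `F` already meet to `⊥`;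
the axioms (⊥1), (⊥2ₙ) and (⊥3) are this single condition in the cases `F = ∅`, `G = ∅` and
`F, G ≠ ∅` respectively.
-/

open Finset

section ElementaryProduct

variable {α : Type u} [BooleanAlgebra α]

def elementaryProduct (R : Finset α) (ε : α → Bool) : α :=
  R.inf fun x => if ε x then x else xᶜ

theorem elementaryProduct_eq_bot_iff (R : Finset α) (ε : α → Bool) :
    elementaryProduct R ε = ⊥ ↔
      (R.filter (fun x => ε x)).inf id ≤ (R.filter (fun x => ¬ε x)).sup id := by
  have hpos : (R.filter (fun x => ε x)).inf (fun x => if ε x then x else xᶜ) =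
      (R.filter (fun x => ε x)).inf id :=
    inf_congr rfl fun x hx => if_pos (mem_filter.mp hx).2
  have hneg : (R.filter (fun x => ¬ε x)).inf (fun x => if ε x then x else xᶜ) =
      ((R.filter (fun x => ¬ε x)).sup id)ᶜ := by
    rw [Finset.compl_sup]
    exact inf_congr rfl fun x hx => if_neg (mem_filter.mp hx).2
  classical
  have hsplit : elementaryProduct R ε =
      (R.filter (fun x => ε x)).inf (fun x => if ε x then x else xᶜ) ⊓
        (R.filter (fun x => ¬ε x)).inf (fun x => if ε x then x else xᶜ) := by
    rw [← inf_union, filter_union_filter_not_eq, elementaryProduct]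
  rw [hsplit, hpos, hneg, ← disjoint_iff, disjoint_compl_right_iff]

theorem forall_elementaryProduct_eq_bot_iff (n : ℕ) (X : Set α) :
    (∀ R : Finset α, ↑R ⊆ X → ∀ ε : α → Bool, elementaryProduct R ε = ⊥ →
        ∃ R' ⊆ R, (∀ x ∈ R', ε x = true) ∧ R'.card ≤ n ∧ R'.inf id = ⊥) ↔
      ∀ F G : Finset α, ↑F ⊆ X → ↑G ⊆ X → Disjoint F G → F.inf id ≤ G.sup id →
        ∃ F' ⊆ F, F'.card ≤ n ∧ F'.inf id = ⊥ := by
  classical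
  constructor
  · intro h F G hF hG hFG hle
    have hpos : (F ∪ G).filter (fun x => decide (x ∈ F)) = F := by
      ext x
      simp only [mem_filter, mem_union, decide_eq_true_eq]
      tauto
    have hneg : (F ∪ G).filter (fun x => ¬decide (x ∈ F)) = G := by
      ext x
      simp only [mem_filter, mem_union, decide_eq_true_eq]
      have : x ∈ F → x ∉ G := fun hx => disjoint_left.mp hFG hx
      tauto
    have hprod : elementaryProduct (F ∪ G) (fun x => decide (x ∈ F)) = ⊥ := by
      rwa [elementaryProduct_eq_bot_iff, hpos, hneg]
    obtain ⟨F', -, hF'F, hcard, hbot⟩ :=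
      h (F ∪ G) (by rw [coe_union]; exact Set.union_subset hF hG) _ hprod
    exact ⟨F', fun x hx => by simpa using hF'F x hx, hcard, hbot⟩
  · intro h R hR ε hprod
    obtain ⟨F', hF', hcard, hbot⟩ :=
      h _ _ ((coe_subset.mpr (filter_subset _ _)).trans hR) ((coe_subset.mpr (filter_subset _ _)).trans hR)
        (disjoint_filter_filter_not _ _ _) ((elementaryProduct_eq_bot_iff R ε).mp hprod)
    exact ⟨F', hF'.trans (filter_subset _ _), fun x hx => (mem_filter.mp (hF' hx)).2, hcard, hbot⟩

end ElementaryProduct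

section Independence

variable {α : Type u} [BooleanAlgebra α] {n : ℕ} {X : Set α}

theorem NIndependent.exists_subset_card_le_inf_eq_bot (hX : NIndependent n X)
    {F G : Finset α} (hF : ↑F ⊆ X) (hG : ↑G ⊆ X) (hFG : Disjoint F G)
    (hle : F.inf id ≤ G.sup id) : ∃ F' ⊆ F, F'.card ≤ n ∧ F'.inf id = ⊥ := by
  obtain ⟨-, hsup, hinf, hmeet⟩ := hX
  by_cases hbot : F.inf id = ⊥
  · rcases F.eq_empty_or_nonempty with rfl | hFne
    · exact ⟨∅, subset_rfl, by simp, hbot⟩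
    · exact hinf F hF hFne hbot
  exfalso
  have hGne : G.Nonempty := by
    rcases G.eq_empty_or_nonempty with rfl | hGne
    · exact absurd (le_bot_iff.mp hle) hbot
    · exact hGne
  rcases F.eq_empty_or_nonempty with rfl | hFne
  · exact hsup G hG hGne (top_le_iff.mp hle)
  · obtain ⟨x, hxF, hxG⟩ := hmeet F G hF hG hFne hGne hbot hle
    exact disjoint_left.mp hFG hxF hxG

theorem nIndependent_of_forall_disjoint (hX : ⊥ ∉ X)
    (h : ∀ F G : Finset α, ↑F ⊆ X → ↑G ⊆ X → Disjoint F G → F.inf id ≤ G.sup id →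
        ∃ F' ⊆ F, F'.card ≤ n ∧ F'.inf id = ⊥) :
    NIndependent n X := by
  refine ⟨hX, fun F hF hFne htop => ?_, fun F hF _ hbot => ?_,
    fun F G hF hG _ _ hne hle => ?_⟩
  · obtain ⟨F', hF', -, hbot⟩ :=
      h ∅ F (by simp) hF (disjoint_empty_left F) (by rw [htop, inf_empty])
    rw [subset_empty.mp hF', inf_empty] at hbot
    obtain ⟨x, hx⟩ := hFne
    have hx_bot : x = ⊥ := eq_bot_iff.mpr (hbot ▸ le_top)
    exact hX (hx_bot ▸ hF hx)
  · exact h F ∅ hF (by simp) (disjoint_empty_right F) (by rw [hbot]; exact bot_le)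
  · by_contra hinter
    have hFG : Disjoint F G := by
      rw [← disjoint_coe, Set.disjoint_iff_inter_eq_empty]
      exact Set.not_nonempty_iff_eq_empty.mp hinter
    obtain ⟨F', hF', -, hbot⟩ := h F G hF hG hFG hle
    exact hne (le_bot_iff.mp (hbot ▸ inf_mono hF'))

theorem nIndependent_iff_forall_disjoint (hX : ⊥ ∉ X) :
    NIndependent n X ↔
      ∀ F G : Finset α, ↑F ⊆ X → ↑G ⊆ X → Disjoint F G → F.inf id ≤ G.sup id →
        ∃ F' ⊆ F, F'.card ≤ n ∧ F'.inf id = ⊥ :=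
  ⟨fun h _ _ hF hG => h.exists_subset_card_le_inf_eq_bot hF hG,
    nIndependent_of_forall_disjoint hX⟩

end Independence

theorem nIndependent_iff_elementary_products_general {α : Type u} [BooleanAlgebra α]
    (n : ℕ) (X : Set α) (hX : ⊥ ∉ X) :
    NIndependent n X ↔
      ∀ R : Finset α, ↑R ⊆ X → ∀ ε : α → Bool,
        R.inf (fun x => if ε x then x else xᶜ) = ⊥ →
        ∃ R' ⊆ R, (∀ x ∈ R', ε x = true) ∧ R'.card ≤ n ∧ R'.inf id = ⊥ := by
  rw [nIndependent_iff_forall_disjoint hX]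
  exact (forall_elementaryProduct_eq_bot_iff n X).symm

/-- For `n` a positive integer, a nontrivial Boolean algebra `A` and `X ⊆ A \ {⊥}`:
`X` is `n`-independent iff every vanishing elementary product over a finite `R ⊆ X`
(where `x¹ = x`, `x⁰ = xᶜ`) admits `R' ⊆ {x ∈ R : ε x = 1}` with `|R'| ≤ n` and
`inf R' = ⊥`. -/
theorem nIndependent_iff_elementary_products {α : Type u} [BooleanAlgebra α] [Nontrivial α]
    (n : ℕ) (hn : 0 < n) (X : Set α) (hX : ⊥ ∉ X) :
    NIndependent n X ↔
      ∀ R : Finset α, ↑R ⊆ X → ∀ ε : α → Bool,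
        R.inf (fun x => if ε x then x else xᶜ) = ⊥ →
        ∃ R' ⊆ R, (∀ x ∈ R', ε x = true) ∧ R'.card ≤ n ∧ R'.inf id = ⊥ :=
  nIndependent_iff_elementary_products_general n X hX
end

section
/- Let 𝒢 be a simple graph on a vertex set V, and let C(𝒢) be the collection of all cliques of 𝒢, i.e., subsets of V whose elements are pairwise adjacent (including the empty set and all singletons). For v ∈ V let v₊ = {c ∈ C(𝒢) : v ∈ c}. Then the family {v₊ : v ∈ V} is a 2-independent subset of the powerset Boolean algebra of C(𝒢). -/
/-- The set of cliques of a simple graph `G` (sets of pairwise adjacent vertices,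
including `∅` and singletons). -/
def Clique {V : Type u} (G : SimpleGraph V) : Type u := {s : Set V // G.IsClique s}

/-- `v₊` is the set of cliques of `G` containing the vertex `v`. -/
def vPlus {V : Type u} (G : SimpleGraph V) (v : V) : Set (Clique G) :=
  {c : Clique G | v ∈ c.1}

theorem Set.mem_finset_sup_id_iff {α : Type*} (F : Finset (Set α)) (a : α) :
    a ∈ F.sup id ↔ ∃ s ∈ F, a ∈ s := by
  simp [Finset.sup_set_eq_biUnion]

namespace Clique

variable {V : Type u} {G : SimpleGraph V}

theorem mem_finsetInf_iff_preimage_vPlus_subset {F : Finset (Set (Clique G))}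
    (hF : ↑F ⊆ Set.range (vPlus G)) (c : Clique G) :
    c ∈ F.inf id ↔ vPlus G ⁻¹' F ⊆ c.1 := by
  simp only [Finset.inf_set_eq_iInter, id, Set.mem_iInter]
  constructor
  · exact fun hc v hv => hc _ hv
  · intro hS f hf
    obtain ⟨v, rfl⟩ := hF hf
    exact hS hf

theorem finsetInf_eq_bot_iff_not_isClique {F : Finset (Set (Clique G))}
    (hF : ↑F ⊆ Set.range (vPlus G)) :
    F.inf id = ⊥ ↔ ¬ G.IsClique (vPlus G ⁻¹' F) := by
  rw [Set.bot_eq_empty, Set.eq_empty_iff_forall_notMem]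
  constructor
  · intro hbot hS
    exact hbot ⟨_, hS⟩ ((mem_finsetInf_iff_preimage_vPlus_subset hF _).2 le_rfl)
  · intro hS c hc
    exact hS (c.2.subset ((mem_finsetInf_iff_preimage_vPlus_subset hF c).1 hc))

end Clique

open Clique in
/-- The family `{v₊ : v ∈ V}` is `2`-independent in the powerset Boolean algebra of the
set of cliques of `G`. -/
theorem vPlus_twoIndependent {V : Type u} (G : SimpleGraph V) :
    NIndependent 2 (Set.range (vPlus G)) := by
  refine ⟨?_, ?_, ?_, ?_⟩
  · rintro ⟨v, hv⟩
    have hsingleton : (⟨{v}, G.isClique_singleton v⟩ : Clique G) ∈ vPlus G v := rfl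
    exact hv.le hsingleton
  · intro F hF _ htop
    obtain ⟨f, hf, hcf⟩ := (Set.mem_finset_sup_id_iff F ⟨∅, G.isClique_empty⟩).1 (htop ▸ trivial)
    obtain ⟨v, rfl⟩ := hF hf
    exact hcf
  · intro F hF _ hbot
    obtain ⟨x, hx, y, hy, hxy, hnadj⟩ : ∃ x ∈ vPlus G ⁻¹' F, ∃ y ∈ vPlus G ⁻¹' F,
        x ≠ y ∧ ¬ G.Adj x y := by
      simpa [SimpleGraph.isClique_iff, Set.Pairwise] using
        (finsetInf_eq_bot_iff_not_isClique hF).1 hbot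
    have hpair : (↑({vPlus G x, vPlus G y} : Finset _) : Set _) ⊆ Set.range (vPlus G) := by
      simp [Set.insert_subset_iff]
    refine ⟨{vPlus G x, vPlus G y}, Finset.insert_subset_iff.2 ⟨hx, by simpa using hy⟩,
      Finset.card_le_two, (finsetInf_eq_bot_iff_not_isClique hpair).2 fun hc => hnadj ?_⟩
    exact hc (by simp) (by simp) hxy
  · intro F Gs hF hG _ _ hbot hle
    have hS : G.IsClique (vPlus G ⁻¹' F) :=
      not_not.1 ((finsetInf_eq_bot_iff_not_isClique hF).not.1 hbot)
    obtain ⟨g, hg, hSg⟩ := (Set.mem_finset_sup_id_iff Gs ⟨_, hS⟩).1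
      (hle ((mem_finsetInf_iff_preimage_vPlus_subset hF _).2 le_rfl))
    obtain ⟨w, rfl⟩ := hG hg
    exact ⟨vPlus G w, hSg, hg⟩
end

section
/- Let n ≥ 2 be an integer, let A and B be Boolean algebras, and let H ⊆ A and K ⊆ B be n-independent. Then the set {(h, 0) : h ∈ H} ∪ {(0, k) : k ∈ K} is n-independent in the product Boolean algebra A × B. -/
/-!
A finite `F ⊆ (H × {⊥}) ∪ ({⊥} × K)` splits as `(A × {⊥}) ∪ ({⊥} × B)` with `A ⊆ H`, `B ⊆ K`,
and then `sup F = (sup A, sup B)`. If `A` and `B` are both nonempty, one element from each side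
already has infimum `⊥`, which is where `2 ≤ n` enters. Otherwise `F` lies in one coordinate,
`inf F` is `(inf A, ⊥)` or `(⊥, inf B)`, and each condition reduces to the same condition for
`H` or for `K`.
-/

universe u v

open Finset

namespace NIndependent

variable {α : Type*} [BooleanAlgebra α] {n : ℕ} {X : Set α} {F G : Finset α}

theorem exists_nonempty_subset_inf_eq_bot (hX : NIndependent n X) (hF : ↑F ⊆ X)
    (hne : F.Nonempty) (hinf : F.inf id = ⊥) :
    ∃ F' ⊆ F, F'.Nonempty ∧ F'.card ≤ n ∧ F'.inf id = ⊥ := by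
  obtain ⟨F', hsub, hcard, hF'⟩ := hX.2.2.1 F hF hne hinf
  refine ⟨F', hsub, nonempty_iff_ne_empty.2 ?_, hcard, hF'⟩
  rintro rfl
  have := subsingleton_of_bot_eq_top hF'.symm
  obtain ⟨x, hx⟩ := hne
  exact hX.1 (Subsingleton.elim x ⊥ ▸ hF hx)

theorem inter_nonempty_of_inf_le_sup (hX : NIndependent n X) (hF : ↑F ⊆ X) (hG : ↑G ⊆ X)
    (hne : F.Nonempty) (hinf : F.inf id ≠ ⊥) (hle : F.inf id ≤ G.sup id) :
    ((F : Set α) ∩ G).Nonempty :=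
  hX.2.2.2 F G hF hG hne
    (nonempty_iff_ne_empty.2 (by rintro rfl; exact hinf (le_bot_iff.1 hle))) hinf hle

end NIndependent

section Prod

variable {α β : Type*} [BooleanAlgebra α] [BooleanAlgebra β] [DecidableEq α] [DecidableEq β]
  {n : ℕ} {H : Set α} {K : Set β} {A C : Finset α} {B D : Finset β}

local notation "ι₁" => (fun a : α => (a, (⊥ : β)))
local notation "ι₂" => (fun b : β => ((⊥ : α), b))

theorem exists_eq_image_union_image {F : Finset (α × β)} (hF : ↑F ⊆ ι₁ '' H ∪ ι₂ '' K) :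
    ∃ (A : Finset α) (B : Finset β), ↑A ⊆ H ∧ ↑B ⊆ K ∧ F = A.image ι₁ ∪ B.image ι₂ := by
  obtain ⟨F₁, F₂, rfl, h₁, h₂⟩ := subset_union_elim hF
  obtain ⟨A, hA, rfl⟩ := subset_set_image_iff.1 h₁
  obtain ⟨B, hB, rfl⟩ := subset_set_image_iff.1 (h₂.trans Set.sdiff_subset)
  exact ⟨A, B, hA, hB, rfl⟩

theorem sup_image_union_image (A : Finset α) (B : Finset β) :
    (A.image ι₁ ∪ B.image ι₂).sup id = (A.sup id, B.sup id) := by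
  have hA : A.sup ι₁ = (A.sup id, ⊥) := (apply_sup_eq_sup_comp (f := id) ι₁ (by simp) rfl).symm
  have hB : B.sup ι₂ = (⊥, B.sup id) := (apply_sup_eq_sup_comp (f := id) ι₂ (by simp) rfl).symm
  rw [sup_union, sup_image, sup_image, Function.id_comp, Function.id_comp, hA, hB]
  simp

theorem inf_image_left (hA : A.Nonempty) : (A.image ι₁).inf id = (A.inf id, ⊥) := by
  rw [inf_image, ← inf'_eq_inf hA, ← inf'_eq_inf hA, apply_inf'_eq_inf'_comp hA ι₁ (by simp)]
  rfl

theorem inf_image_right (hB : B.Nonempty) : (B.image ι₂).inf id = (⊥, B.inf id) := by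
  rw [inf_image, ← inf'_eq_inf hB, ← inf'_eq_inf hB, apply_inf'_eq_inf'_comp hB ι₂ (by simp)]
  rfl

theorem inf_image_union_image_eq_bot (hA : A.Nonempty) (hB : B.Nonempty) :
    (A.image ι₁ ∪ B.image ι₂).inf id = ⊥ := by
  obtain ⟨a, ha⟩ := hA
  obtain ⟨b, hb⟩ := hB
  refine le_bot_iff.1 ((le_inf (inf_le (mem_union_left _ (mem_image_of_mem _ ha)))
    (inf_le (mem_union_right _ (mem_image_of_mem _ hb)))).trans ?_)
  exact (Prod.ext (inf_bot_eq a) (bot_inf_eq b)).le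

namespace NIndependent

theorem sup_image_union_image_ne_top (hH : NIndependent n H) (hK : NIndependent n K)
    (hA : ↑A ⊆ H) (hB : ↑B ⊆ K) (hne : A.Nonempty ∨ B.Nonempty) :
    (A.image ι₁ ∪ B.image ι₂).sup id ≠ ⊤ := by
  rw [sup_image_union_image, Ne, Prod.ext_iff]
  rintro ⟨hA_top, hB_top⟩
  rcases hne with hne | hne
  exacts [hH.2.1 A hA hne hA_top, hK.2.1 B hB hne hB_top]

theorem exists_subset_image_left_inf_eq_bot (hH : NIndependent n H) (hA : ↑A ⊆ H)
    (hne : A.Nonempty) (hinf : (A.image ι₁).inf id = ⊥) :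
    ∃ F' ⊆ A.image ι₁, F'.card ≤ n ∧ F'.inf id = ⊥ := by
  rw [inf_image_left hne] at hinf
  obtain ⟨A', hA', hne', hcard, hinf'⟩ :=
    hH.exists_nonempty_subset_inf_eq_bot hA hne (congrArg Prod.fst hinf)
  refine ⟨A'.image ι₁, image_subset_image hA', card_image_le.trans hcard, ?_⟩
  rw [inf_image_left hne', hinf']
  rfl

theorem exists_subset_image_right_inf_eq_bot (hK : NIndependent n K) (hB : ↑B ⊆ K)
    (hne : B.Nonempty) (hinf : (B.image ι₂).inf id = ⊥) :
    ∃ F' ⊆ B.image ι₂, F'.card ≤ n ∧ F'.inf id = ⊥ := by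
  rw [inf_image_right hne] at hinf
  obtain ⟨B', hB', hne', hcard, hinf'⟩ :=
    hK.exists_nonempty_subset_inf_eq_bot hB hne (congrArg Prod.snd hinf)
  refine ⟨B'.image ι₂, image_subset_image hB', card_image_le.trans hcard, ?_⟩
  rw [inf_image_right hne', hinf']
  rfl

theorem exists_subset_image_union_image_inf_eq_bot (hn : 2 ≤ n) (hH : NIndependent n H)
    (hK : NIndependent n K) (hA : ↑A ⊆ H) (hB : ↑B ⊆ K) (hne : A.Nonempty ∨ B.Nonempty)
    (hinf : (A.image ι₁ ∪ B.image ι₂).inf id = ⊥) :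
    ∃ F' ⊆ A.image ι₁ ∪ B.image ι₂, F'.card ≤ n ∧ F'.inf id = ⊥ := by
  rcases B.eq_empty_or_nonempty with rfl | ⟨b, hb⟩
  · rw [image_empty, union_empty] at hinf ⊢
    exact hH.exists_subset_image_left_inf_eq_bot hA (hne.resolve_right not_nonempty_empty) hinf
  rcases A.eq_empty_or_nonempty with rfl | ⟨a, ha⟩
  · rw [image_empty, empty_union] at hinf ⊢
    exact hK.exists_subset_image_right_inf_eq_bot hB ⟨b, hb⟩ hinf
  refine ⟨({a} : Finset α).image ι₁ ∪ ({b} : Finset β).image ι₂,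
    union_subset_union (image_subset_image (singleton_subset_iff.2 ha))
      (image_subset_image (singleton_subset_iff.2 hb)),
    (card_union_le _ _).trans (by simpa using hn),
    inf_image_union_image_eq_bot (singleton_nonempty a) (singleton_nonempty b)⟩

theorem inter_image_left_nonempty (hH : NIndependent n H) (hA : ↑A ⊆ H) (hC : ↑C ⊆ H)
    (hne : A.Nonempty) (hinf : (A.image ι₁).inf id ≠ ⊥)
    (hle : (A.image ι₁).inf id ≤ (C.image ι₁ ∪ D.image ι₂).sup id) :
    (↑(A.image ι₁) ∩ ↑(C.image ι₁ ∪ D.image ι₂) : Set (α × β)).Nonempty := by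
  rw [inf_image_left hne] at hinf hle
  rw [sup_image_union_image] at hle
  obtain ⟨a, ha, hc⟩ :=
    hH.inter_nonempty_of_inf_le_sup hA hC hne (fun h => hinf (by rw [h]; rfl)) hle.1
  exact ⟨(a, ⊥), mem_image_of_mem _ ha, mem_union_left _ (mem_image_of_mem _ hc)⟩

theorem inter_image_right_nonempty (hK : NIndependent n K) (hB : ↑B ⊆ K) (hD : ↑D ⊆ K)
    (hne : B.Nonempty) (hinf : (B.image ι₂).inf id ≠ ⊥)
    (hle : (B.image ι₂).inf id ≤ (C.image ι₁ ∪ D.image ι₂).sup id) :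
    (↑(B.image ι₂) ∩ ↑(C.image ι₁ ∪ D.image ι₂) : Set (α × β)).Nonempty := by
  rw [inf_image_right hne] at hinf hle
  rw [sup_image_union_image] at hle
  obtain ⟨b, hb, hd⟩ :=
    hK.inter_nonempty_of_inf_le_sup hB hD hne (fun h => hinf (by rw [h]; rfl)) hle.2
  exact ⟨(⊥, b), mem_image_of_mem _ hb, mem_union_right _ (mem_image_of_mem _ hd)⟩

theorem inter_image_union_image_nonempty (hH : NIndependent n H) (hK : NIndependent n K)
    (hA : ↑A ⊆ H) (hB : ↑B ⊆ K) (hC : ↑C ⊆ H) (hD : ↑D ⊆ K) (hne : A.Nonempty ∨ B.Nonempty)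
    (hinf : (A.image ι₁ ∪ B.image ι₂).inf id ≠ ⊥)
    (hle : (A.image ι₁ ∪ B.image ι₂).inf id ≤ (C.image ι₁ ∪ D.image ι₂).sup id) :
    (↑(A.image ι₁ ∪ B.image ι₂) ∩ ↑(C.image ι₁ ∪ D.image ι₂) : Set (α × β)).Nonempty := by
  rcases B.eq_empty_or_nonempty with rfl | hB'
  · rw [image_empty, union_empty] at hinf hle ⊢
    exact hH.inter_image_left_nonempty hA hC (hne.resolve_right not_nonempty_empty) hinf hle
  rcases A.eq_empty_or_nonempty with rfl | hA'
  · rw [image_empty, empty_union] at hinf hle ⊢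
    exact hK.inter_image_right_nonempty hB hD hB' hinf hle
  exact absurd (inf_image_union_image_eq_bot hA' hB') hinf

end NIndependent

end Prod

/-- For `n ≥ 2`, if `H ⊆ A` and `K ⊆ B` are `n`-independent, then
`(H × {⊥}) ∪ ({⊥} × K)` is `n`-independent in the product Boolean algebra `A × B`. -/
theorem nIndependent_prod {α : Type u} {β : Type v} [BooleanAlgebra α] [BooleanAlgebra β]
    (n : ℕ) (hn : 2 ≤ n) (H : Set α) (K : Set β)
    (hH : NIndependent n H) (hK : NIndependent n K) :
    NIndependent n
      ((fun h => (h, (⊥ : β))) '' H ∪ (fun k => ((⊥ : α), k)) '' K) := by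
  classical
  refine ⟨?_, fun F hF hne => ?_, fun F hF hne hinf => ?_,
    fun F G hF hG hne _ hinf hle => ?_⟩
  · rintro (⟨h, hh, hbot⟩ | ⟨k, hk, hbot⟩)
    · obtain rfl : h = ⊥ := congrArg Prod.fst hbot
      exact hH.1 hh
    · obtain rfl : k = ⊥ := congrArg Prod.snd hbot
      exact hK.1 hk
  all_goals obtain ⟨A, B, hA, hB, rfl⟩ := exists_eq_image_union_image hF
  all_goals have hne' : A.Nonempty ∨ B.Nonempty := by simpa using hne
  · exact hH.sup_image_union_image_ne_top hK hA hB hne'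
  · exact hH.exists_subset_image_union_image_inf_eq_bot hn hK hA hB hne' hinf
  · obtain ⟨C, D, hC, hD, rfl⟩ := exists_eq_image_union_image hG
    exact hH.inter_image_union_image_nonempty hK hA hB hC hD hne' hinf hle
end

section
/- Let W be a set of cardinality ℵ₁. Let FR(W) be the Boolean algebra of clopen subsets of the Cantor space {0,1}^W, with generators x_α = {f ∈ {0,1}^W : f(α) = 1} for α ∈ W, and let FinCo(W) be the Boolean algebra of subsets of W that are finite or cofinite. Then the set X = {(x_α, {α}) : α ∈ W} ∪ {(0, 1)} (where (0,1) is the pair of the bottom element of FR(W) and the top element of FinCo(W)) is a 3-independent generating set of the product Boolean algebra FR(W) × FinCo(W); in particular, this algebra is 3-free. -/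
universe u v

/-- The finite–cofinite algebra on `W`: subsets of `W` that are finite or cofinite. -/
def FinCo (W : Type u) : Type u := {s : Set W // s.Finite ∨ sᶜ.Finite}

namespace FinCo

variable {W : Type u}

instance : Max (FinCo W) :=
  ⟨fun s t => ⟨s.1 ∪ t.1, by
    rcases s.2 with hs | hs
    · rcases t.2 with ht | ht
      · exact Or.inl (hs.union ht)
      · exact Or.inr (ht.subset (by rw [Set.compl_union]; exact Set.inter_subset_right))
    · exact Or.inr (hs.subset (by rw [Set.compl_union]; exact Set.inter_subset_left))⟩⟩

instance : Min (FinCo W) :=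
  ⟨fun s t => ⟨s.1 ∩ t.1, by
    rcases s.2 with hs | hs
    · exact Or.inl (hs.subset Set.inter_subset_left)
    · rcases t.2 with ht | ht
      · exact Or.inl (ht.subset Set.inter_subset_right)
      · exact Or.inr (by rw [Set.compl_inter]; exact hs.union ht)⟩⟩

instance : Top (FinCo W) := ⟨⟨Set.univ, Or.inr (by simp)⟩⟩

instance : Bot (FinCo W) := ⟨⟨∅, Or.inl (Set.finite_empty)⟩⟩

instance : Compl (FinCo W) := ⟨fun s => ⟨s.1ᶜ, by rcases s.2 with hs | hs <;> simp [hs]⟩⟩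

instance : SDiff (FinCo W) := ⟨fun s t => s ⊓ tᶜ⟩

instance : HImp (FinCo W) := ⟨fun s t => sᶜ ⊔ t⟩

instance : LE (FinCo W) := ⟨fun s t => s.1 ≤ t.1⟩

instance : LT (FinCo W) := ⟨fun s t => s.1 < t.1⟩

instance : BooleanAlgebra (FinCo W) :=
  Function.Injective.booleanAlgebra (fun s : FinCo W => s.1) Subtype.coe_injective
    Iff.rfl Iff.rfl
    (fun _ _ => rfl) (fun _ _ => rfl) rfl rfl (fun _ => rfl)
    (fun a b => (Set.diff_eq a.1 b.1).symm)
    (fun a b => by show a.1ᶜ ∪ b.1 = a.1 ⇨ b.1; rw [himp_eq]; exact Set.union_comm _ _)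

end FinCo

open TopologicalSpace in
/-- The free Boolean algebra on `W` generators, realized as the algebra of clopen
subsets of the Cantor space `{0,1}^W`. -/
abbrev FR (W : Type u) : Type u := Clopens (W → Bool)

/-- The generator `x_a = {f ∈ {0,1}^W : f a = 1}` of `FR W`. -/
def xGen {W : Type u} (a : W) : FR W :=
  ⟨(fun f : W → Bool => f a) ⁻¹' {true}, (isClopen_discrete _).preimage (continuous_apply a)⟩

/-- The element `{a}` of the finite–cofinite algebra on `W`. -/
def singletonFinCo {W : Type u} (a : W) : FinCo W :=
  ⟨{a}, Or.inl (Set.finite_singleton a)⟩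

/-!
A clopen subset of `{0,1}^W` depends on finitely many coordinates `S` (compactness), so it is the
join of those atoms `⨅ a ∈ S, ±x_a` whose sign pattern lies in it; sending it to the same join of
the atoms `⨅ a ∈ S, ±b_a` of any Boolean algebra is a homomorphism extending `b`, and it does not
change when `S` grows because each atom splits as `(b_a ⊓ -) ⊔ (b_aᶜ ⊓ -)`. Pairwise disjoint
`d_a` extend to `FinCo W` (for infinite `W`) by sending finite sets to joins and cofinite sets to
complements of joins. For a 3-preserving `f`, put `c = f (⊥, ⊤)`: since `(⊥, ⊤)`, `(x_a, {a})`,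
`(x_b, {b})` meet in `⊥`, the elements `c ⊓ f (x_a, {a})` are pairwise disjoint, and gluing the
first extension below `cᶜ` with the second below `c` extends `f`. Independence is checked by
evaluating at points of `{0,1}^W` in the first factor and of `W` in the second.
-/

open TopologicalSpace Function Topology

section Generation

variable {α : Type u} [BooleanAlgebra α] {X : Set α}

theorem InSubalgebra.finset_sup {ι : Type*} (s : Finset ι) {g : ι → α}
    (h : ∀ i ∈ s, InSubalgebra X (g i)) : InSubalgebra X (s.sup g) :=
  Finset.sup_induction .bot (fun _ ha _ hb => .sup ha hb) h

theorem InSubalgebra.finset_inf {ι : Type*} (s : Finset ι) {g : ι → α}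
    (h : ∀ i ∈ s, InSubalgebra X (g i)) : InSubalgebra X (s.inf g) :=
  Finset.inf_induction .top (fun _ ha _ hb => .inf ha hb) h

theorem InSubalgebra.map_eq {β : Type*} [BooleanAlgebra β] {g g' : BoundedLatticeHom α β}
    (h : ∀ x ∈ X, g x = g' x) {a : α} (ha : InSubalgebra X a) : g a = g' a := by
  induction ha with
  | base hx => exact h _ hx
  | bot => simp
  | top => simp
  | compl _ ih => rw [map_compl', map_compl', ih]
  | sup _ _ ih₁ ih₂ => rw [map_sup, map_sup, ih₁, ih₂]
  | inf _ _ ih₁ ih₂ => rw [map_inf, map_inf, ih₁, ih₂]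

theorem Generates.boundedLatticeHom_ext {β : Type*} [BooleanAlgebra β] (hX : Generates X)
    {g g' : BoundedLatticeHom α β} (h : ∀ x ∈ X, g x = g' x) : g = g' :=
  DFunLike.ext _ _ fun a => (hX a).map_eq h

end Generation

namespace Finset

variable {ι β : Type*} [DecidableEq ι] [BooleanAlgebra β] {e : ι → β}

theorem sup_inf_sup_of_pairwiseDisjoint {s t : Finset ι}
    (he : (↑(s ∪ t) : Set ι).PairwiseDisjoint e) : s.sup e ⊓ t.sup e = (s ∩ t).sup e := by
  refine le_antisymm ?_ (le_inf (sup_mono inter_subset_left) (sup_mono inter_subset_right))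
  rw [sup_inf_distrib_right]
  refine Finset.sup_le fun i hi => ?_
  rw [sup_inf_distrib_left]
  refine Finset.sup_le fun j hj => ?_
  by_cases hij : i = j
  · subst hij
    exact inf_le_left.trans (le_sup (mem_inter.2 ⟨hi, hj⟩))
  · rw [(he (by simp [hi]) (by simp [hj]) hij).eq_bot]
    exact bot_le

theorem sup_sdiff_of_pairwiseDisjoint {s t : Finset ι}
    (he : (↑(s ∪ t) : Set ι).PairwiseDisjoint e) : (s \ t).sup e = s.sup e \ t.sup e := by
  refine le_antisymm (le_sdiff.2 ⟨sup_mono sdiff_subset, ?_⟩) (sdiff_le_iff.2 ?_)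
  · rw [disjoint_iff, sup_inf_sup_of_pairwiseDisjoint (he.subset (by simp)), sdiff_inter_self,
      sup_empty]
  · rw [← sup_union, union_sdiff_self_eq_union]
    exact sup_mono subset_union_right

end Finset

namespace BoundedLatticeHom

variable {α γ : Type*} [Lattice α] [BoundedOrder α] [Lattice γ] [BoundedOrder γ]

def fst : BoundedLatticeHom (α × γ) α := { LatticeHom.fst with map_top' := rfl, map_bot' := rfl }

def snd : BoundedLatticeHom (α × γ) γ := { LatticeHom.snd with map_top' := rfl, map_bot' := rfl }

theorem map_finset_sup_iff {ι : Type*} (φ : BoundedLatticeHom α Prop) (s : Finset ι)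
    (g : ι → α) : φ (s.sup g) ↔ ∃ i ∈ s, φ (g i) := by
  simp [map_finset_sup, Finset.sup_eq_iSup]

theorem map_finset_inf_iff {ι : Type*} (φ : BoundedLatticeHom α Prop) (s : Finset ι)
    (g : ι → α) : φ (s.inf g) ↔ ∀ i ∈ s, φ (g i) := by
  simp [map_finset_inf, Finset.inf_eq_iInf]

def glue {β : Type*} [BooleanAlgebra β] (c : β) (f : BoundedLatticeHom α β)
    (g : BoundedLatticeHom γ β) : BoundedLatticeHom (α × γ) β where
  toFun p := cᶜ ⊓ f p.1 ⊔ c ⊓ g p.2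
  map_sup' p q := by
    simp only [Prod.fst_sup, Prod.snd_sup, map_sup, inf_sup_left]
    exact sup_sup_sup_comm _ _ _ _
  map_inf' p q := by
    have h₁ : cᶜ ⊓ f p.1 ⊓ (c ⊓ g q.2) = ⊥ := by
      rw [inf_inf_inf_comm, compl_inf_eq_bot, bot_inf_eq]
    have h₂ : c ⊓ g p.2 ⊓ (cᶜ ⊓ f q.1) = ⊥ := by
      rw [inf_inf_inf_comm, inf_compl_eq_bot, bot_inf_eq]
    simp only [Prod.fst_inf, Prod.snd_inf, map_inf, inf_sup_left, inf_sup_right, h₁, h₂,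
      sup_bot_eq, bot_sup_eq, inf_inf_inf_comm, inf_idem]
  map_top' := by simp
  map_bot' := by simp

end BoundedLatticeHom

namespace TopologicalSpace.Clopens

section Point

variable {X : Type*} [TopologicalSpace X]

def memHom (x : X) : BoundedLatticeHom (Clopens X) Prop where
  toFun c := x ∈ c
  map_sup' _ _ := rfl
  map_inf' _ _ := rfl
  map_top' := rfl
  map_bot' := rfl

theorem mem_finset_inf {ι : Type*} {x : X} (s : Finset ι) (g : ι → Clopens X) :
    x ∈ s.inf g ↔ ∀ i ∈ s, x ∈ g i :=
  (memHom x).map_finset_inf_iff s g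

theorem mem_finset_sup {ι : Type*} {x : X} (s : Finset ι) (g : ι → Clopens X) :
    x ∈ s.sup g ↔ ∃ i ∈ s, x ∈ g i :=
  (memHom x).map_finset_sup_iff s g

end Point

section Pi

variable {ι : Type*} {X : ι → Type*} [∀ i, TopologicalSpace (X i)]

theorem exists_finset_dependsOn [∀ i, CompactSpace (X i)] (c : Clopens (∀ i, X i)) :
    ∃ S : Finset ι, DependsOn (· ∈ c) (S : Set ι) := by
  classical
  have hloc (f : ∀ i, X i) : ∃ (I : Finset ι) (t : ∀ i, Set (X i)),
      (∀ i, t i ∈ 𝓝 (f i)) ∧ ∀ g ∈ (I : Set ι).pi t, (g ∈ c ↔ f ∈ c) := by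
    have hnhds : {g | g ∈ c ↔ f ∈ c} ∈ 𝓝 f := by
      by_cases hf : f ∈ c
      · simpa [hf] using c.isClopen.isOpen.mem_nhds hf
      · simp only [hf, iff_false]
        exact c.isClopen.isClosed.isOpen_compl.mem_nhds hf
    rwa [nhds_pi, Filter.mem_pi'] at hnhds
  choose I t ht hI using hloc
  obtain ⟨F, -, hF⟩ := isCompact_univ.elim_nhds_subcover (fun f => (I f : Set ι).pi (t f))
    fun f _ => set_pi_mem_nhds (I f).finite_toSet fun i _ => ht f i
  refine ⟨F.biUnion I, fun g g' hgg' => ?_⟩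
  obtain ⟨f, hfF, hgf⟩ := Set.mem_iUnion₂.1 (hF (Set.mem_univ g))
  have hg'f : g' ∈ (I f : Set ι).pi (t f) := fun i hi =>
    hgg' i (Finset.mem_biUnion.2 ⟨f, hfF, hi⟩) ▸ hgf i hi
  exact propext ((hI f g hgf).trans (hI f g' hg'f).symm)

theorem exists_finset_dependsOn₂ [∀ i, CompactSpace (X i)] (c d : Clopens (∀ i, X i)) :
    ∃ S : Finset ι, DependsOn (· ∈ c) (S : Set ι) ∧ DependsOn (· ∈ d) (S : Set ι) := by
  classical
  obtain ⟨S, hc⟩ := c.exists_finset_dependsOn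
  obtain ⟨S', hd⟩ := d.exists_finset_dependsOn
  exact ⟨S ∪ S', hc.mono (by simp), hd.mono (by simp)⟩

theorem dependsOn_mem_inf {c d : Clopens (∀ i, X i)} {s : Set ι} (hc : DependsOn (· ∈ c) s)
    (hd : DependsOn (· ∈ d) s) : DependsOn (· ∈ c ⊓ d) s :=
  fun _ _ h => congrArg₂ And (hc h) (hd h)

theorem dependsOn_mem_sup {c d : Clopens (∀ i, X i)} {s : Set ι} (hc : DependsOn (· ∈ c) s)
    (hd : DependsOn (· ∈ d) s) : DependsOn (· ∈ c ⊔ d) s :=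
  fun _ _ h => congrArg₂ Or (hc h) (hd h)

end Pi

end TopologicalSpace.Clopens

namespace FinCo

variable {W : Type u}

def ofFinset (s : Finset W) : FinCo W := ⟨s, Or.inl s.finite_toSet⟩

theorem exists_eq_ofFinset_or_compl (v : FinCo W) : ∃ s, v = ofFinset s ∨ v = (ofFinset s)ᶜ := by
  rcases v with ⟨v, hv | hv⟩
  · exact ⟨hv.toFinset, .inl (Subtype.ext hv.coe_toFinset.symm)⟩
  · exact ⟨hv.toFinset, .inr (Subtype.ext (by change v = (↑hv.toFinset)ᶜ; simp))⟩

def memHom (w : W) : BoundedLatticeHom (FinCo W) Prop where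
  toFun v := w ∈ v.1
  map_sup' _ _ := rfl
  map_inf' _ _ := rfl
  map_top' := rfl
  map_bot' := rfl

theorem ofFinset_empty : ofFinset (∅ : Finset W) = ⊥ := Subtype.ext Finset.coe_empty

theorem ofFinset_singleton (a : W) : ofFinset {a} = singletonFinCo a :=
  Subtype.ext (Finset.coe_singleton a)

section DecidableEq

variable [DecidableEq W]

theorem ofFinset_insert (a : W) (s : Finset W) :
    ofFinset (insert a s) = singletonFinCo a ⊔ ofFinset s :=
  Subtype.ext ((Finset.coe_insert a s).trans (Set.insert_eq a s))

theorem ofFinset_inf_ofFinset (s t : Finset W) : ofFinset s ⊓ ofFinset t = ofFinset (s ∩ t) :=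
  Subtype.ext (Finset.coe_inter s t).symm

theorem ofFinset_inf_compl_ofFinset (s t : Finset W) :
    ofFinset s ⊓ (ofFinset t)ᶜ = ofFinset (s \ t) :=
  Subtype.ext (Finset.coe_sdiff s t).symm

theorem compl_ofFinset_inf_compl_ofFinset (s t : Finset W) :
    (ofFinset s)ᶜ ⊓ (ofFinset t)ᶜ = (ofFinset (s ∪ t))ᶜ := by
  rw [← compl_sup]
  exact congrArg _ (Subtype.ext (Finset.coe_union s t).symm)

end DecidableEq

section Lift

variable {β : Type*} [BooleanAlgebra β] (d : W → β)

open Classical in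
noncomputable def liftFun (v : FinCo W) : β :=
  if h : v.1.Finite then h.toFinset.sup d else ((v.2.resolve_left h).toFinset.sup d)ᶜ

theorem liftFun_ofFinset (s : Finset W) : liftFun d (ofFinset s) = s.sup d := by
  have h : (ofFinset s).1.Finite := s.finite_toSet
  rw [liftFun, dif_pos h]
  congr 1
  exact s.finite_toSet_toFinset

variable [Infinite W]

theorem liftFun_compl_ofFinset (s : Finset W) : liftFun d (ofFinset s)ᶜ = (s.sup d)ᶜ := by
  have h : ¬((ofFinset s)ᶜ).1.Finite := s.finite_toSet.infinite_compl
  rw [liftFun, dif_neg h]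
  congr 2
  ext a
  rw [Set.Finite.mem_toFinset]
  change a ∉ (s : Set W)ᶜ ↔ a ∈ s
  simp

theorem liftFun_compl (v : FinCo W) : liftFun d vᶜ = (liftFun d v)ᶜ := by
  obtain ⟨s, rfl | rfl⟩ := exists_eq_ofFinset_or_compl v
  · rw [liftFun_compl_ofFinset, liftFun_ofFinset]
  · rw [compl_compl, liftFun_compl_ofFinset, liftFun_ofFinset, compl_compl]

variable {d}

theorem liftFun_inf (hd : Pairwise (Disjoint on d)) (v w : FinCo W) :
    liftFun d (v ⊓ w) = liftFun d v ⊓ liftFun d w := by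
  classical
  have hd' (s : Set W) : s.PairwiseDisjoint d := hd.set_pairwise s
  have mixed (s t : Finset W) : liftFun d (ofFinset s ⊓ (ofFinset t)ᶜ) =
      liftFun d (ofFinset s) ⊓ liftFun d (ofFinset t)ᶜ := by
    rw [ofFinset_inf_compl_ofFinset, liftFun_ofFinset, liftFun_ofFinset, liftFun_compl_ofFinset,
      Finset.sup_sdiff_of_pairwiseDisjoint (hd' _), sdiff_eq]
  obtain ⟨s, rfl | rfl⟩ := exists_eq_ofFinset_or_compl v <;>
    obtain ⟨t, rfl | rfl⟩ := exists_eq_ofFinset_or_compl w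
  · rw [ofFinset_inf_ofFinset, liftFun_ofFinset, liftFun_ofFinset, liftFun_ofFinset,
      Finset.sup_inf_sup_of_pairwiseDisjoint (hd' _)]
  · exact mixed s t
  · rw [inf_comm, mixed, inf_comm]
  · rw [compl_ofFinset_inf_compl_ofFinset, liftFun_compl_ofFinset, liftFun_compl_ofFinset,
      liftFun_compl_ofFinset, Finset.sup_union, compl_sup]

noncomputable def lift (hd : Pairwise (Disjoint on d)) : BoundedLatticeHom (FinCo W) β where
  toFun := liftFun d
  map_inf' := liftFun_inf hd
  map_sup' v w := by
    rw [← compl_compl (v ⊔ w), compl_sup, liftFun_compl, liftFun_inf hd, liftFun_compl,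
      liftFun_compl, compl_inf, compl_compl, compl_compl]
  map_top' := by rw [← compl_bot, ← ofFinset_empty, liftFun_compl_ofFinset, Finset.sup_empty,
    compl_bot]
  map_bot' := by rw [← ofFinset_empty, liftFun_ofFinset, Finset.sup_empty]

theorem lift_singletonFinCo (hd : Pairwise (Disjoint on d)) (a : W) :
    lift hd (singletonFinCo a) = d a := by
  rw [← ofFinset_singleton]
  exact (liftFun_ofFinset d {a}).trans (Finset.sup_singleton)

end Lift

end FinCo

theorem mem_xGen {W : Type u} {f : W → Bool} {a : W} : f ∈ xGen a ↔ f a = true := Iff.rfl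

namespace FR

variable {W : Type u} [DecidableEq W] {β γ : Type*} [BooleanAlgebra β] [BooleanAlgebra γ]
  (b : W → β)

def indicator (T : Finset W) : W → Bool := fun w => decide (w ∈ T)

def atom (S T : Finset W) : β := S.inf fun a => if a ∈ T then b a else (b a)ᶜ

variable {b}

theorem atom_le {S T : Finset W} {a : W} (haS : a ∈ S) (haT : a ∈ T) : atom b S T ≤ b a :=
  (Finset.inf_le haS).trans_eq (if_pos haT)

theorem atom_le_compl {S T : Finset W} {a : W} (haS : a ∈ S) (haT : a ∉ T) :
    atom b S T ≤ (b a)ᶜ :=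
  (Finset.inf_le haS).trans_eq (if_neg haT)

theorem pairwiseDisjoint_atom (S : Finset W) :
    (S.powerset : Set (Finset W)).PairwiseDisjoint (atom b S) := by
  intro T hT T' hT' hne
  obtain ⟨a, ha⟩ : ∃ a, ¬(a ∈ T ↔ a ∈ T') := by
    by_contra! h
    exact hne (Finset.ext h)
  have hT : T ⊆ S := Finset.mem_powerset.1 hT
  have hT' : T' ⊆ S := Finset.mem_powerset.1 hT'
  by_cases haT : a ∈ T
  · have haT' : a ∉ T' := fun h => ha (iff_of_true haT h)
    exact disjoint_compl_right.mono (atom_le (hT haT) haT) (atom_le_compl (hT haT) haT')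
  · have haT' : a ∈ T' := by tauto
    exact disjoint_compl_left.mono (atom_le_compl (hT' haT') haT) (atom_le (hT' haT') haT')

theorem atom_insert_of_notMem {S T : Finset W} {a : W} (haT : a ∉ T) :
    atom b (insert a S) T = (b a)ᶜ ⊓ atom b S T := by
  rw [atom, Finset.inf_insert, if_neg haT, atom]

theorem atom_insert_insert {S T : Finset W} {a : W} (haS : a ∉ S) :
    atom b (insert a S) (insert a T) = b a ⊓ atom b S T := by
  rw [atom, Finset.inf_insert, if_pos (Finset.mem_insert_self a T), atom]
  congr 1
  refine Finset.inf_congr rfl fun x hx => ?_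
  have hxa : x ≠ a := ne_of_mem_of_not_mem hx haS
  simp [hxa]

/-- Splitting each atom over `S` along the new coordinate `a` into its two halves. -/
theorem sup_atom_insert {S : Finset W} {a : W} (haS : a ∉ S) {A : Finset (Finset W)}
    (hA : A ⊆ S.powerset) :
    A.sup (atom b (insert a S)) ⊔ (A.image (insert a)).sup (atom b (insert a S)) =
      A.sup (atom b S) := by
  have haT {T} (hT : T ∈ A) : a ∉ T := fun h => haS (Finset.mem_powerset.1 (hA hT) h)
  rw [Finset.sup_image, Function.comp_def,
    Finset.sup_congr rfl fun T hT => atom_insert_of_notMem (haT hT),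
    Finset.sup_congr rfl fun T _ => atom_insert_insert haS, ← Finset.sup_sup]
  exact Finset.sup_congr rfl fun T _ => by
    rw [Pi.sup_apply, ← inf_sup_right, compl_sup_eq_top, top_inf_eq]

theorem sup_powerset_atom (S : Finset W) : S.powerset.sup (atom b S) = ⊤ := by
  induction S using Finset.induction_on with
  | empty => simp [atom]
  | insert a S haS ih =>
    rw [Finset.powerset_insert, Finset.sup_union, sup_atom_insert haS subset_rfl, ih]

variable (b) in
open Classical in
noncomputable def evalAt (S : Finset W) : BoundedLatticeHom (FR W) β where
  toFun c := {T ∈ S.powerset | indicator T ∈ c}.sup (atom b S)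
  map_sup' c d := by
    rw [← Finset.sup_union, ← Finset.filter_or]
    exact congrArg₂ _ (Finset.filter_congr fun _ _ => Iff.rfl) rfl
  map_inf' c d := by
    rw [Finset.sup_inf_sup_of_pairwiseDisjoint
      ((pairwiseDisjoint_atom S).subset (Finset.coe_subset.2
      (Finset.union_subset (Finset.filter_subset _ _) (Finset.filter_subset _ _)))),
      ← Finset.filter_and]
    exact congrArg₂ _ (Finset.filter_congr fun _ _ => Iff.rfl) rfl
  map_top' := by
    rw [Finset.filter_true_of_mem fun T _ => show indicator T ∈ (⊤ : FR W) from trivial,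
      sup_powerset_atom]
  map_bot' := by
    rw [Finset.filter_false_of_mem fun T _ (h : indicator T ∈ (⊥ : FR W)) => h, Finset.sup_empty]

theorem evalAt_insert {S : Finset W} {a : W} {c : FR W} (hc : DependsOn (· ∈ c) (S : Set W))
    (haS : a ∉ S) : evalAt b (insert a S) c = evalAt b S c := by
  classical
  have hind {T : Finset W} (hT : T ⊆ S) : indicator (insert a T) ∈ c ↔ indicator T ∈ c := by
    refine Eq.to_iff (hc fun x hx => ?_)
    simp [indicator, ne_of_mem_of_not_mem hx haS]
  change {T ∈ (insert a S).powerset | indicator T ∈ c}.sup (atom b (insert a S)) =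
    {T ∈ S.powerset | indicator T ∈ c}.sup (atom b S)
  rw [Finset.powerset_insert, Finset.filter_union, Finset.filter_image, Finset.sup_union,
    ← sup_atom_insert haS (Finset.filter_subset _ _)]
  congr 3
  exact Finset.filter_congr fun T hT => hind (Finset.mem_powerset.1 hT)

theorem evalAt_union {S : Finset W} {c : FR W} (hc : DependsOn (· ∈ c) (S : Set W))
    (E : Finset W) : evalAt b (S ∪ E) c = evalAt b S c := by
  induction E using Finset.induction_on with
  | empty => rw [Finset.union_empty]
  | insert x E _ ih =>
    rw [Finset.union_insert]
    by_cases hx : x ∈ S ∪ E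
    · rw [Finset.insert_eq_self.2 hx, ih]
    · rw [evalAt_insert (hc.mono (by simp)) hx, ih]

theorem evalAt_eq_evalAt {S S' : Finset W} {c : FR W} (hS : DependsOn (· ∈ c) (S : Set W))
    (hS' : DependsOn (· ∈ c) (S' : Set W)) : evalAt b S c = evalAt b S' c := by
  rw [← evalAt_union hS S', Finset.union_comm, evalAt_union hS']

theorem map_evalAt (φ : BoundedLatticeHom β γ) (S : Finset W) (c : FR W) :
    φ (evalAt b S c) = evalAt (φ ∘ b) S c := by
  classical
  change φ ({T ∈ S.powerset | indicator T ∈ c}.sup (atom b S)) =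
    {T ∈ S.powerset | indicator T ∈ c}.sup (atom (φ ∘ b) S)
  rw [map_finset_sup]
  refine Finset.sup_congr rfl fun T _ => ?_
  simp only [Function.comp_apply, atom, map_finset_inf]
  exact Finset.inf_congr rfl fun a _ => by split_ifs with h <;> simp [h]

theorem evalAt_xGen {S : Finset W} {c : FR W} (hc : DependsOn (· ∈ c) (S : Set W)) :
    evalAt xGen S c = c := by
  classical
  have mem_atom {T : Finset W} {f : W → Bool} :
      f ∈ atom xGen S T ↔ ∀ a ∈ S, f a = indicator T a := by
    rw [atom, Clopens.mem_finset_inf]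
    refine forall₂_congr fun a _ => ?_
    split_ifs with h <;> simp [xGen, indicator, h, ← SetLike.mem_coe]
  ext f
  change f ∈ {T ∈ S.powerset | indicator T ∈ c}.sup (atom xGen S) ↔ f ∈ c
  rw [Clopens.mem_finset_sup]
  constructor
  · rintro ⟨T, hT, hf⟩
    exact (Eq.to_iff (hc (mem_atom.1 hf))).2 (Finset.mem_filter.1 hT).2
  · intro hf
    have hfT : ∀ a ∈ S, f a = indicator {a ∈ S | f a} a := fun a ha => by
      simp [indicator, ha]
    refine ⟨{a ∈ S | f a}, Finset.mem_filter.2 ⟨Finset.mem_powerset.2 (Finset.filter_subset _ _),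
      (Eq.to_iff (hc hfT)).1 hf⟩, mem_atom.2 hfT⟩

variable (b) in
noncomputable def liftFun (c : FR W) : β := evalAt b c.exists_finset_dependsOn.choose c

theorem liftFun_eq_evalAt {S : Finset W} {c : FR W} (hc : DependsOn (· ∈ c) (S : Set W)) :
    liftFun b c = evalAt b S c :=
  evalAt_eq_evalAt c.exists_finset_dependsOn.choose_spec hc

variable (b) in
noncomputable def lift : BoundedLatticeHom (FR W) β where
  toFun := liftFun b
  map_sup' c d := by
    obtain ⟨S, hc, hd⟩ := Clopens.exists_finset_dependsOn₂ c d
    rw [liftFun_eq_evalAt (Clopens.dependsOn_mem_sup hc hd), liftFun_eq_evalAt hc,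
      liftFun_eq_evalAt hd, map_sup]
  map_inf' c d := by
    obtain ⟨S, hc, hd⟩ := Clopens.exists_finset_dependsOn₂ c d
    rw [liftFun_eq_evalAt (Clopens.dependsOn_mem_inf hc hd), liftFun_eq_evalAt hc,
      liftFun_eq_evalAt hd, map_inf]
  map_top' := by rw [liftFun_eq_evalAt (S := ∅) fun _ _ _ => rfl, map_top]
  map_bot' := by rw [liftFun_eq_evalAt (S := ∅) fun _ _ _ => rfl, map_bot]

theorem lift_xGen (a : W) : lift b (xGen a) = b a := by
  classical
  have hdep : DependsOn (· ∈ xGen a) (({a} : Finset W) : Set W) := fun f g h => by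
    simp [mem_xGen, h a]
  have hpatterns : {T ∈ ({a} : Finset W).powerset | indicator T ∈ xGen a} = {{a}} := by
    ext T
    simp only [Finset.mem_filter, Finset.mem_powerset, Finset.subset_singleton_iff, mem_xGen,
      indicator, decide_eq_true_eq, Finset.mem_singleton]
    constructor
    · rintro ⟨rfl | rfl, h⟩
      exacts [absurd h (Finset.notMem_empty a), rfl]
    · rintro rfl
      exact ⟨.inr rfl, Finset.mem_singleton_self a⟩
  change liftFun b (xGen a) = b a
  rw [liftFun_eq_evalAt hdep]
  change {T ∈ ({a} : Finset W).powerset | indicator T ∈ xGen a}.sup (atom b {a}) = b a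
  rw [hpatterns, Finset.sup_singleton]
  simp [atom]

end FR

theorem InSubalgebra.evalAt {α : Type u} [BooleanAlgebra α] {X : Set α} {W : Type*}
    [DecidableEq W] {b : W → α} (hb : ∀ a, InSubalgebra X (b a)) (S : Finset W) (c : FR W) :
    InSubalgebra X (FR.evalAt b S c) := by
  classical
  refine .finset_sup _ fun T _ => .finset_inf _ fun a _ => ?_
  split_ifs
  exacts [hb a, (hb a).compl]

section PairGen

variable {W : Type u}

def pairGen (a : W) : FR W × FinCo W := (xGen a, singletonFinCo a)

variable (W) in
def pairGenSet : Set (FR W × FinCo W) := Set.range pairGen ∪ {(⊥, ⊤)}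

theorem pairGen_injective : Injective (pairGen (W := W)) := fun _ _ h =>
  Set.singleton_injective (congrArg (fun p : FR W × FinCo W => p.2.1) h)

theorem botTop_inf_pairGen_inf_pairGen {a b : W} (hab : a ≠ b) :
    ((⊥, ⊤) : FR W × FinCo W) ⊓ (pairGen a ⊓ pairGen b) = ⊥ :=
  Prod.ext (bot_inf_eq _) <| Subtype.ext <| (Set.univ_inter _).trans <|
    Set.singleton_inter_eq_empty.2 fun h => hab (Set.mem_singleton_iff.1 h)

variable {F G : Finset (FR W × FinCo W)} {f : W → Bool} {w : W}

theorem mem_fst_finset_sup : f ∈ (F.sup id).1 ↔ ∃ x ∈ F, f ∈ x.1 :=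
  ((Clopens.memHom f).comp .fst).map_finset_sup_iff F id

theorem mem_fst_finset_inf : f ∈ (F.inf id).1 ↔ ∀ x ∈ F, f ∈ x.1 :=
  ((Clopens.memHom f).comp .fst).map_finset_inf_iff F id

theorem mem_snd_finset_sup : w ∈ (F.sup id).2.1 ↔ ∃ x ∈ F, w ∈ x.2.1 :=
  ((FinCo.memHom w).comp .snd).map_finset_sup_iff F id

theorem mem_snd_finset_inf : w ∈ (F.inf id).2.1 ↔ ∀ x ∈ F, w ∈ x.2.1 :=
  ((FinCo.memHom w).comp .snd).map_finset_inf_iff F id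

open Classical in
theorem mem_fst_finset_inf_of_botTop_notMem (hF : ↑F ⊆ pairGenSet W) (hz : (⊥, ⊤) ∉ F) :
    (fun w => decide (pairGen w ∈ F)) ∈ (F.inf id).1 := by
  refine mem_fst_finset_inf.2 fun x hx => ?_
  rcases hF hx with ⟨a, rfl⟩ | rfl
  exacts [decide_eq_true hx, absurd hx hz]

theorem mem_snd_finset_inf_of_forall_pairGen_mem (hF : ↑F ⊆ pairGenSet W)
    (hw : ∀ a, pairGen a ∈ F → a = w) : w ∈ (F.inf id).2.1 := by
  refine mem_snd_finset_inf.2 fun x hx => ?_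
  rcases hF hx with ⟨a, rfl⟩ | rfl
  exacts [(hw a hx).symm, trivial]

theorem eq_of_pairGen_mem_of_finset_inf_ne_bot (hne : F.inf id ≠ ⊥) (hz : (⊥, ⊤) ∈ F)
    {a b : W} (ha : pairGen a ∈ F) (hb : pairGen b ∈ F) : a = b := by
  by_contra hab
  refine hne (le_bot_iff.1 ?_)
  rw [← botTop_inf_pairGen_inf_pairGen hab]
  exact le_inf (Finset.inf_le hz) (le_inf (Finset.inf_le ha) (Finset.inf_le hb))

theorem exists_forall_pairGen_mem_eq [Nonempty W]
    (h : ∀ a b, pairGen a ∈ F → pairGen b ∈ F → a = b) : ∃ w : W, ∀ a, pairGen a ∈ F → a = w := by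
  by_cases hgen : ∃ a, pairGen a ∈ F
  · obtain ⟨w, hw⟩ := hgen
    exact ⟨w, fun a ha => h a w ha hw⟩
  · exact ⟨Classical.arbitrary W, fun a ha => absurd ⟨a, ha⟩ hgen⟩

theorem exists_card_le_three_inf_eq_bot [Nonempty W] (hF : ↑F ⊆ pairGenSet W)
    (hbot : F.inf id = ⊥) : ∃ F' ⊆ F, F'.card ≤ 3 ∧ F'.inf id = ⊥ := by
  classical
  have hz : (⊥, ⊤) ∈ F := by
    by_contra hz
    have hf := mem_fst_finset_inf_of_botTop_notMem hF hz
    rw [hbot] at hf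
    exact hf
  obtain ⟨a, b, ha, hb, hab⟩ : ∃ a b, pairGen a ∈ F ∧ pairGen b ∈ F ∧ a ≠ b := by
    by_contra! h
    obtain ⟨w, hw⟩ := exists_forall_pairGen_mem_eq h
    have hw := mem_snd_finset_inf_of_forall_pairGen_mem hF hw
    rw [hbot] at hw
    exact hw
  refine ⟨{(⊥, ⊤), pairGen a, pairGen b}, ?_, Finset.card_le_three, ?_⟩
  · simp [Finset.insert_subset_iff, hz, ha, hb]
  · simp [botTop_inf_pairGen_inf_pairGen hab]

/-- Without `(⊥, ⊤)`, the point that is `1` exactly on the generators in `F` separates `F`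
from `G`; with it, `F` has at most one generator `(x_a, {a})` and the coordinate `a` (or any
coordinate, using that a finite `G` cannot cover `W`) does. -/
theorem inter_nonempty_of_finset_inf_le_sup [Infinite W] (hF : ↑F ⊆ pairGenSet W)
    (hG : ↑G ⊆ pairGenSet W) (hne : F.inf id ≠ ⊥) (hle : F.inf id ≤ G.sup id) :
    ((F : Set (FR W × FinCo W)) ∩ (G : Set _)).Nonempty := by
  classical
  by_cases hz : (⊥, ⊤) ∈ F
  · have huniq (a b : W) := eq_of_pairGen_mem_of_finset_inf_ne_bot hne hz (a := a) (b := b)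
    by_cases hgen : ∃ a, pairGen a ∈ F
    · obtain ⟨a, ha⟩ := hgen
      obtain ⟨x, hx, hax⟩ := mem_snd_finset_sup.1
        (hle.2 (mem_snd_finset_inf_of_forall_pairGen_mem hF fun b hb => huniq b a hb ha))
      rcases hG hx with ⟨b, rfl⟩ | rfl
      · obtain rfl : a = b := hax
        exact ⟨_, ha, hx⟩
      · exact ⟨_, hz, hx⟩
    · by_contra hFG
      have hall (w : W) : pairGen w ∈ G := by
        obtain ⟨x, hx, hwx⟩ := mem_snd_finset_sup.1
          (hle.2 (mem_snd_finset_inf_of_forall_pairGen_mem hF fun a ha => absurd ⟨a, ha⟩ hgen))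
        rcases hG hx with ⟨b, rfl⟩ | rfl
        · obtain rfl : w = b := hwx
          exact hx
        · exact absurd ⟨_, hz, hx⟩ hFG
      exact Set.infinite_univ ((G.finite_toSet.preimage pairGen_injective.injOn).subset
        fun w _ => hall w)
  · obtain ⟨x, hx, hfx⟩ := mem_fst_finset_sup.1 (hle.1 (mem_fst_finset_inf_of_botTop_notMem hF hz))
    rcases hG hx with ⟨b, rfl⟩ | rfl
    · exact ⟨_, of_decide_eq_true hfx, hx⟩
    · exact hfx.elim

theorem nIndependent_pairGenSet [Infinite W] : NIndependent 3 (pairGenSet W) := by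
  refine ⟨?_, fun F hF _ htop => ?_, fun F hF _ => exists_card_le_three_inf_eq_bot hF,
    fun F G hF hG _ _ => inter_nonempty_of_finset_inf_le_sup hF hG⟩
  · rintro (⟨a, h⟩ | h)
    · exact (congrArg (fun p : FR W × FinCo W => a ∈ p.2.1) h).mp rfl
    · exact (congrArg (fun p : FR W × FinCo W => Classical.arbitrary W ∈ p.2.1) h).mpr trivial
  · obtain ⟨x, hx, hfx⟩ := mem_fst_finset_sup.1 (htop ▸ trivial : (fun _ => false) ∈ (F.sup id).1)
    rcases hF hx with ⟨a, rfl⟩ | rfl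
    exacts [Bool.false_ne_true hfx, hfx]

theorem inSubalgebra_pairGenSet_mk_bot (c : FR W) : InSubalgebra (pairGenSet W) (c, ⊥) := by
  classical
  obtain ⟨S, hS⟩ := c.exists_finset_dependsOn
  have hc : (c, ⊥) = (⊥, ⊤)ᶜ ⊓ FR.evalAt pairGen S c := by
    refine Prod.ext ?_ (by simp)
    change c = (⊥ : FR W)ᶜ ⊓ BoundedLatticeHom.fst (FR.evalAt pairGen S c)
    rw [compl_bot, FR.map_evalAt, top_inf_eq]
    exact (FR.evalAt_xGen hS).symm
  rw [hc]
  exact (InSubalgebra.base (.inr rfl)).compl.inf (.evalAt (fun a => .base (.inl ⟨a, rfl⟩)) S c)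

theorem inSubalgebra_pairGenSet_bot_mk (v : FinCo W) : InSubalgebra (pairGenSet W) (⊥, v) := by
  classical
  have hz : InSubalgebra (pairGenSet W) (⊥, ⊤) := .base (.inr rfl)
  have hfinite (s : Finset W) : InSubalgebra (pairGenSet W) (⊥, FinCo.ofFinset s) := by
    induction s using Finset.induction_on with
    | empty => rw [FinCo.ofFinset_empty]; exact .bot
    | insert a s _ ih =>
      have hs : ((⊥ : FR W), FinCo.ofFinset (insert a s)) =
          (⊥, ⊤) ⊓ pairGen a ⊔ (⊥, .ofFinset s) :=
        Prod.ext (by simp) (by simp [FinCo.ofFinset_insert, pairGen])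
      rw [hs]
      exact (hz.inf (.base (.inl ⟨a, rfl⟩))).sup ih
  obtain ⟨s, rfl | rfl⟩ := v.exists_eq_ofFinset_or_compl
  · exact hfinite s
  · have hs : ((⊥ : FR W), (FinCo.ofFinset s)ᶜ) = (⊥, ⊤) ⊓ (⊥, .ofFinset s)ᶜ :=
      Prod.ext (by simp) (by simp)
    rw [hs]
    exact hz.inf (hfinite s).compl

theorem generates_pairGenSet : Generates (pairGenSet W) := by
  rintro ⟨c, v⟩
  have hcv : (c, v) = (c, ⊥) ⊔ (⊥, v) := Prod.ext (by simp) (by simp)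
  rw [hcv]
  exact (inSubalgebra_pairGenSet_mk_bot c).sup (inSubalgebra_pairGenSet_bot_mk v)

theorem disjoint_of_nPreserving {β : Type*} [BooleanAlgebra β] {f : FR W × FinCo W → β}
    (hf : NPreserving 3 (pairGenSet W) f) {a b : W} (hab : a ≠ b) :
    Disjoint (f (⊥, ⊤) ⊓ f (pairGen a)) (f (⊥, ⊤) ⊓ f (pairGen b)) := by
  have hmem (i : Fin 3) : ![((⊥, ⊤) : FR W × FinCo W), pairGen a, pairGen b] i ∈ pairGenSet W := by
    fin_cases i
    exacts [.inr rfl, .inl ⟨a, rfl⟩, .inl ⟨b, rfl⟩]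
  have h := hf _ hmem (by simpa [Fin.univ_succ] using botTop_inf_pairGen_inf_pairGen hab)
  simp only [Fin.univ_succ] at h
  rw [disjoint_iff, inf_inf_inf_comm, inf_idem]
  simpa using h

theorem nFree_pairGenSet [Infinite W] : NFree.{u, v} 3 (pairGenSet W) := by
  classical
  intro β _ _ f hf
  set c := f (⊥, ⊤)
  have hd : Pairwise (Disjoint on fun a => c ⊓ f (pairGen a)) :=
    fun _ _ hab => disjoint_of_nPreserving hf hab
  let g := BoundedLatticeHom.glue c (FR.lift (f ∘ pairGen)) (FinCo.lift hd)
  have hg : ∀ x ∈ pairGenSet W, g x = f x := by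
    rintro _ (⟨a, rfl⟩ | rfl)
    · change cᶜ ⊓ FR.lift _ (xGen a) ⊔ c ⊓ FinCo.lift hd (singletonFinCo a) = f (pairGen a)
      rw [FR.lift_xGen, FinCo.lift_singletonFinCo, ← inf_assoc, inf_idem, Function.comp_apply,
        ← inf_sup_right, compl_sup_eq_top, top_inf_eq]
    · change cᶜ ⊓ FR.lift _ ⊥ ⊔ c ⊓ FinCo.lift hd ⊤ = c
      simp
  exact ⟨g, hg, fun g' hg' =>
    generates_pairGenSet.boundedLatticeHom_ext fun x hx => (hg' x hx).trans (hg x hx).symm⟩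

end PairGen

/-- For `W` of cardinality `ℵ₁`, the set `{(x_α, {α}) : α ∈ W} ∪ {(⊥, ⊤)}` is a
`3`-independent generating set of `FR(W) × FinCo(W)`; in particular this product
algebra is `3`-free (over this set). -/
theorem fr_prod_finCo_threeFree {W : Type u} (hW : Cardinal.mk W = Cardinal.aleph 1) :
    NIndependent 3
        ((Set.range fun a : W => ((xGen a, singletonFinCo a) : FR W × FinCo W)) ∪
          {((⊥ : FR W), (⊤ : FinCo W))}) ∧
    Generates
        ((Set.range fun a : W => ((xGen a, singletonFinCo a) : FR W × FinCo W)) ∪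
          {((⊥ : FR W), (⊤ : FinCo W))}) ∧
    NFree.{u, v} 3
        ((Set.range fun a : W => ((xGen a, singletonFinCo a) : FR W × FinCo W)) ∪
          {((⊥ : FR W), (⊤ : FinCo W))}) := by
  have : Infinite W := Cardinal.infinite_iff.2 (hW ▸ Cardinal.aleph0_le_aleph 1)
  exact ⟨nIndependent_pairGenSet, generates_pairGenSet, nFree_pairGenSet⟩
end

section
/- Let n ≥ 2 be an integer and let X and Y be compact topological spaces, each possessing an n-ary closed subbase. Then the topological sum (disjoint union) X ⊕ Y possesses an n-ary closed subbase; that is, the disjoint union of two n-compact spaces is n-compact. -/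
universe u v w

/-- `S` is a closed subbase for the space `Z`: its members are closed and their
complements form a subbasis generating the topology of `Z`. -/
def IsClosedSubbasis {Z : Type u} [t : TopologicalSpace Z] (S : Set (Set Z)) : Prop :=
  (∀ s ∈ S, IsClosed s) ∧ TopologicalSpace.generateFrom ((·ᶜ) '' S) = t

/-- `T` is `n`-linked: every subfamily of at most `n` of its members has nonempty
intersection. -/
def NLinked {Z : Type u} (n : ℕ) (T : Set (Set Z)) : Prop :=
  ∀ u : Finset (Set Z), ↑u ⊆ T → u.card ≤ n → (⋂₀ (↑u : Set (Set Z))).Nonempty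

/-- `S` is `n`-ary: every `n`-linked subfamily of `S` has nonempty total intersection. -/
def NAry {Z : Type u} (n : ℕ) (S : Set (Set Z)) : Prop :=
  ∀ T ⊆ S, NLinked n T → (⋂₀ T).Nonempty

/-- Auxiliary: images of generated open sets under a nice injection are generated open. -/
lemma genAux {X : Type u} {Z : Type w} {f : X → Z} (hf : Function.Injective f)
    (S : Set (Set X)) (C : Set (Set Z))
    (hC1 : ∀ s ∈ S, (f '' s)ᶜ ∈ C) (hC2 : Set.range f ∈ C) :
    ∀ u : Set X, TopologicalSpace.GenerateOpen ((·ᶜ) '' S) u →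
      TopologicalSpace.GenerateOpen C (f '' u) := by
  intro u hu
  induction hu with
  | basic v hv =>
      obtain ⟨s, hs, rfl⟩ := hv
      have : f '' sᶜ = (f '' s)ᶜ ∩ Set.range f := by
        ext z
        constructor
        · rintro ⟨x, hx, rfl⟩
          exact ⟨fun ⟨x', hx', hx'e⟩ => hx (hf hx'e ▸ hx'), Set.mem_range_self x⟩
        · rintro ⟨hz, x, rfl⟩
          exact ⟨x, fun hx => hz ⟨x, hx, rfl⟩, rfl⟩
      rw [this]
      exact TopologicalSpace.GenerateOpen.inter _ _ (TopologicalSpace.GenerateOpen.basic _ (hC1 s hs))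
        (TopologicalSpace.GenerateOpen.basic _ hC2)
  | univ =>
      rw [Set.image_univ]
      exact TopologicalSpace.GenerateOpen.basic _ hC2
  | inter a b _ _ iha ihb =>
      rw [Set.image_inter hf]
      exact TopologicalSpace.GenerateOpen.inter _ _ iha ihb
  | sUnion s _ ih =>
      rw [Set.image_sUnion]
      exact TopologicalSpace.GenerateOpen.sUnion _ (by rintro _ ⟨t, ht, rfl⟩; exact ih t ht)

/-- Auxiliary: a nonempty `n`-linked family contained in the injective images of an
`n`-ary family together with the range has nonempty intersection. -/
lemma naryAux {X : Type u} {Z : Type w} {f : X → Z} (hf : Function.Injective f)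
    (n : ℕ) (hn : 1 ≤ n) (S : Set (Set X)) (hSary : NAry n S) (L : Set (Set Z))
    (hL : L ⊆ insert (Set.range f) ((Set.image f) '' S))
    (hlink : NLinked n L) (hne : L.Nonempty) : (⋂₀ L).Nonempty := by
  classical
  -- X is nonempty
  obtain ⟨A, hA⟩ := hne
  have hAsub : A ⊆ Set.range f := by
    rcases hL hA with h | ⟨s, _, rfl⟩
    · exact h ▸ le_refl _
    · exact Set.image_subset_range _ _
  have hAne : A.Nonempty := by
    have := hlink {A} (by simpa using hA) (by simpa using hn)
    simpa using this
  obtain ⟨z0, hz0⟩ := hAne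
  obtain ⟨x0, rfl⟩ := hAsub hz0
  -- the pulled-back family
  set S' : Set (Set X) := {s ∈ S | f '' s ∈ L} with hS'
  have hlink' : NLinked n S' := by
    intro u hu hcard
    rcases u.eq_empty_or_nonempty with rfl | ⟨s0, hs0⟩
    · exact ⟨x0, by simp⟩
    · set u' : Finset (Set Z) := u.image (Set.image f) with hu'
      have hsub : (↑u' : Set (Set Z)) ⊆ L := by
        intro A hA
        simp only [hu', Finset.coe_image, Set.mem_image, Finset.mem_coe] at hA
        obtain ⟨s, hs, rfl⟩ := hA
        exact (hu hs).2
      have hcard' : u'.card ≤ n := le_trans Finset.card_image_le hcard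
      obtain ⟨z, hz⟩ := hlink u' hsub hcard'
      have hz0 : z ∈ f '' s0 := hz _ (by
        simp only [hu', Finset.coe_image, Set.mem_image, Finset.mem_coe]
        exact ⟨s0, hs0, rfl⟩)
      obtain ⟨x, _, rfl⟩ := hz0
      refine ⟨x, fun s hs => ?_⟩
      have : f x ∈ f '' s := hz _ (by
        simp only [hu', Finset.coe_image, Set.mem_image, Finset.mem_coe]
        exact ⟨s, hs, rfl⟩)
      exact hf.mem_set_image.mp this
  obtain ⟨x, hx⟩ := hSary S' (fun s hs => hs.1) hlink'
  refine ⟨f x, fun A hA => ?_⟩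
  rcases hL hA with h | ⟨s, hs, rfl⟩
  · exact h ▸ Set.mem_range_self x
  · exact ⟨x, hx s ⟨hs, hA⟩, rfl⟩

/-- For `n ≥ 2`, if the compact spaces `X` and `Y` each possess an `n`-ary closed
subbase, then their topological sum `X ⊕ Y` is compact and possesses an `n`-ary closed
subbase; that is, the disjoint union of two `n`-compact spaces is `n`-compact. -/
theorem nCompact_sum {X : Type u} {Y : Type v} [TopologicalSpace X] [TopologicalSpace Y]
    [CompactSpace X] [CompactSpace Y] (n : ℕ) (hn : 2 ≤ n)
    (S : Set (Set X)) (hS : IsClosedSubbasis S) (hSary : NAry n S)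
    (T : Set (Set Y)) (hT : IsClosedSubbasis T) (hTary : NAry n T) :
    CompactSpace (X ⊕ Y) ∧
      ∃ U : Set (Set (X ⊕ Y)), IsClosedSubbasis U ∧ NAry n U := by
  refine ⟨inferInstance, ?_⟩
  set UX : Set (Set (X ⊕ Y)) := insert (Set.range Sum.inl) ((Set.image Sum.inl) '' S) with hUX
  set UY : Set (Set (X ⊕ Y)) := insert (Set.range Sum.inr) ((Set.image Sum.inr) '' T) with hUY
  refine ⟨UX ∪ UY, ⟨?_, ?_⟩, ?_⟩
  · -- closedness
    rintro s (hs | hs) <;> rcases hs with rfl | ⟨s, hs, rfl⟩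
    · exact isClosed_range_inl
    · exact Topology.IsClosedEmbedding.inl.isClosedMap _ (hS.1 s hs)
    · exact isClosed_range_inr
    · exact Topology.IsClosedEmbedding.inr.isClosedMap _ (hT.1 s hs)
  · -- generation
    refine le_antisymm ?_ (le_generateFrom ?_)
    · -- every sum-open set is generated
      intro W hW
      have hWl : IsOpen (Sum.inl ⁻¹' W) := (isOpen_sum_iff.mp hW).1
      have hWr : IsOpen (Sum.inr ⁻¹' W) := (isOpen_sum_iff.mp hW).2
      have hCl : TopologicalSpace.GenerateOpen ((·ᶜ) '' (UX ∪ UY)) (Sum.inl '' (Sum.inl ⁻¹' W)) := by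
        refine genAux Sum.inl_injective S _ ?_ ?_ _ ?_
        · intro s hs
          exact ⟨Sum.inl '' s, Or.inl (Or.inr ⟨s, hs, rfl⟩), rfl⟩
        · exact ⟨Set.range Sum.inr, Or.inr (Or.inl rfl), Set.compl_range_inr⟩
        · rw [← hS.2] at hWl; exact hWl
      have hCr : TopologicalSpace.GenerateOpen ((·ᶜ) '' (UX ∪ UY)) (Sum.inr '' (Sum.inr ⁻¹' W)) := by
        refine genAux Sum.inr_injective T _ ?_ ?_ _ ?_
        · intro s hs
          exact ⟨Sum.inr '' s, Or.inr (Or.inr ⟨s, hs, rfl⟩), rfl⟩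
        · exact ⟨Set.range Sum.inl, Or.inl (Or.inl rfl), Set.compl_range_inl⟩
        · rw [← hT.2] at hWr; exact hWr
      have hWeq : W = Sum.inl '' (Sum.inl ⁻¹' W) ∪ Sum.inr '' (Sum.inr ⁻¹' W) := by
        ext z; cases z with
        | inl x => simp
        | inr y => simp
      have hun := TopologicalSpace.GenerateOpen.sUnion
        (g := (·ᶜ) '' (UX ∪ UY))
        {Sum.inl '' (Sum.inl ⁻¹' W), Sum.inr '' (Sum.inr ⁻¹' W)}
        (by rintro _ (rfl | rfl) <;> assumption)
      rw [Set.sUnion_pair] at hun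
      rwa [hWeq]
    · -- every generator is open
      rintro _ ⟨s, hs, rfl⟩
      show IsOpen sᶜ
      rcases hs with hs | hs <;> rcases hs with rfl | ⟨s, hs, rfl⟩
      · rw [Set.compl_range_inl]; exact isOpen_range_inr
      · exact (Topology.IsClosedEmbedding.inl.isClosedMap _ (hS.1 s hs)).isOpen_compl
      · rw [Set.compl_range_inr]; exact isOpen_range_inl
      · exact (Topology.IsClosedEmbedding.inr.isClosedMap _ (hT.1 s hs)).isOpen_compl
  · -- n-ary
    classical
    intro L hL hlink
    rcases L.eq_empty_or_nonempty with rfl | hne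
    · rw [Set.sInter_empty]
      have := hlink ∅ (by simp) (by simp)
      simpa using this
    · -- L lies entirely on one side
      have hside : L ⊆ UX ∨ L ⊆ UY := by
        by_contra h
        push_neg at h
        rw [Set.not_subset] at h
        obtain ⟨⟨A, hAL, hAX⟩, hB⟩ := h
        rw [Set.not_subset] at hB
        obtain ⟨B, hBL, hBY⟩ := hB
        have hBX : B ∈ UX := (hL hBL).resolve_right hBY
        have hAY : A ∈ UY := (hL hAL).resolve_left hAX
        have hAsub : A ⊆ Set.range Sum.inr := by
          rcases hAY with rfl | ⟨s, _, rfl⟩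
          · exact le_refl _
          · exact Set.image_subset_range _ _
        have hBsub : B ⊆ Set.range Sum.inl := by
          rcases hBX with rfl | ⟨s, _, rfl⟩
          · exact le_refl _
          · exact Set.image_subset_range _ _
        have : (⋂₀ (↑({A, B} : Finset (Set (X ⊕ Y))) : Set (Set (X ⊕ Y)))).Nonempty := by
          refine hlink _ ?_ (le_trans (le_trans (Finset.card_insert_le _ _) (by simp)) hn)
          intro C hC
          simp only [Finset.coe_insert, Finset.coe_singleton, Set.mem_insert_iff,
            Set.mem_singleton_iff] at hC
          rcases hC with rfl | rfl
          · exact hAL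
          · exact hBL
        obtain ⟨z, hz⟩ := this
        simp only [Finset.coe_insert, Finset.coe_singleton, Set.sInter_insert,
          Set.sInter_singleton, Set.mem_inter_iff] at hz
        obtain ⟨y, hy⟩ := hAsub hz.1
        obtain ⟨x, hx⟩ := hBsub hz.2
        exact Sum.inl_ne_inr (hx.trans hy.symm)
      rcases hside with h | h
      · exact naryAux Sum.inl_injective n (le_trans one_le_two hn) S hSary L h hlink hne
      · exact naryAux Sum.inr_injective n (le_trans one_le_two hn) T hTary L h hlink hne
end

section
/- Let A be an infinite Boolean algebra that is ω-free over some subset G ⊆ A, and let W be a set with the same cardinality as A. Then there exists a surjective Boolean algebra homomorphism from A onto the finite–cofinite algebra on W (the Boolean algebra of subsets of W that are finite or cofinite). -/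
universe u v

/-!
Two-valued homomorphisms on `α` are determined by their values on `G`, and by the prime ideal
theorem they separate any `a` from a Boolean subalgebra not containing it; hence `G` generates
`α`, so `G \ {⊥}` is infinite of cardinality `#α` and `W` embeds into it, `w ↦ g_w`. Freeness
gives two-valued `u_w` with `u_w g = [g = g_w]` on `G`; together they form `F : α → Set W` with
`F g_w = {w}` and `F g` finite for `g ∈ G`. Composed with any free ultrafilter on `W`, `F` kills
`G`, so all these composites coincide, which forces every `F a` to be finite or cofinite. Thus
`F` maps `α` onto the finite–cofinite algebra.
-/

open Order Cardinal

section PrimeIdeal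

variable {α : Type*} [BooleanAlgebra α]

def Order.Ideal.IsPrime.toBoundedLatticeHom {P : Ideal α} (hP : P.IsPrime) :
    BoundedLatticeHom α (Set PUnit.{v + 1}) where
  toFun a := {_u | a ∉ P}
  map_sup' a b := by
    ext
    simp only [Set.mem_ofPred_eq, Ideal.sup_mem_iff, Set.sup_eq_union, Set.mem_union]
    exact not_and_or
  map_inf' a b := by
    ext
    simp only [Set.mem_ofPred_eq, Set.inf_eq_inter, Set.mem_inter_iff]
    exact ⟨fun h => ⟨fun ha => h (P.lower inf_le_left ha), fun hb => h (P.lower inf_le_right hb)⟩,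
      fun ⟨ha, hb⟩ hab => (hP.mem_or_mem hab).elim ha hb⟩
  map_top' := by
    ext
    simpa using hP.top_notMem
  map_bot' := by
    ext
    simp

@[simp]
theorem Order.Ideal.IsPrime.mem_toBoundedLatticeHom {P : Ideal α} (hP : P.IsPrime) (a : α)
    (x : PUnit.{v + 1}) : x ∈ hP.toBoundedLatticeHom a ↔ a ∉ P :=
  Iff.rfl

theorem Order.Ideal.exists_isPrime_of_supClosed {D : Set α} (hD : SupClosed D) (hD₀ : D.Nonempty)
    {b : α} (hb : ∀ d ∈ D, ¬b ≤ d) : ∃ Q : Ideal α, Q.IsPrime ∧ D ⊆ Q ∧ b ∉ Q := by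
  have hI : IsIdeal (lowerClosure D : Set α) := by
    refine ⟨(lowerClosure D).lower, hD₀.mono subset_lowerClosure, ?_⟩
    rintro _ ⟨d₁, hd₁, hx⟩ _ ⟨d₂, hd₂, hy⟩
    exact ⟨d₁ ⊔ d₂, ⟨_, hD hd₁ hd₂, le_rfl⟩, hx.trans le_sup_left, hy.trans le_sup_right⟩
  have hdisj : Disjoint (PFilter.principal b : Set α) hI.toIdeal := by
    rw [Set.disjoint_left]
    rintro x hbx ⟨d, hd, hxd⟩
    exact hb d hd ((PFilter.mem_principal.1 hbx).trans hxd)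
  obtain ⟨Q, hQ, hIQ, hQb⟩ := DistribLattice.prime_ideal_of_disjoint_filter_ideal hdisj
  exact ⟨Q, hQ, subset_lowerClosure.trans hIQ,
    Set.disjoint_left.1 hQb (PFilter.mem_principal.2 le_rfl)⟩

theorem Order.Ideal.IsPrime.exists_isPrime_inter_eq (L : BooleanSubalgebra α) {P : Ideal α}
    (hP : P.IsPrime) {b : α} (hb : ∀ s ∈ L, s ∈ P → ¬b ≤ s) :
    ∃ Q : Ideal α, Q.IsPrime ∧ b ∉ Q ∧ ∀ s ∈ L, s ∈ Q ↔ s ∈ P := by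
  obtain ⟨Q, hQ, hLPQ, hbQ⟩ := exists_isPrime_of_supClosed
    (L.supClosed.inter fun _ hx _ hy => P.sup_mem hx hy) ⟨⊥, L.bot_mem, P.bot_mem⟩
    fun s hs => hb s hs.1 hs.2
  refine ⟨Q, hQ, hbQ, fun s hs => ⟨fun hsQ => ?_, fun hsP => hLPQ ⟨hs, hsP⟩⟩⟩
  by_contra hsP
  have hscQ : sᶜ ∈ Q := hLPQ ⟨L.compl_mem hs, hP.compl_mem_of_notMem hsP⟩
  exact hQ.top_notMem (by simpa using Q.sup_mem hsQ hscQ)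

theorem BooleanSubalgebra.exists_hom_ne_of_notMem {L : BooleanSubalgebra α} {a : α}
    (ha : a ∉ L) : ∃ f g : BoundedLatticeHom α (Set PUnit.{v + 1}),
      (∀ x ∈ L, f x = g x) ∧ f a ≠ g a := by
  -- `P` contains every `x ∈ L` that `a` splits inside `L`; since `a ∉ L`, `⊤` is not one of them.
  obtain ⟨P, hP, hDP, htopP⟩ := Ideal.exists_isPrime_of_supClosed (D := {x | x ∈ L ∧ x ⊓ a ∈ L})
    (fun x hx y hy => ⟨L.sup_mem hx.1 hy.1, by rw [inf_sup_right]; exact L.sup_mem hx.2 hy.2⟩)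
    ⟨⊥, L.bot_mem, by simp⟩ (b := ⊤)
    fun d hd htop => ha (by simpa [top_le_iff.1 htop] using hd.2)
  have hsplit : ∀ s ∈ L, s ∈ P → sᶜ ⊓ a ∉ L := fun s hs hsP hsa =>
    htopP (by simpa using P.sup_mem hsP (hDP ⟨L.compl_mem hs, hsa⟩))
  obtain ⟨Q₁, hQ₁, haQ₁, hQ₁L⟩ := hP.exists_isPrime_inter_eq L fun s hs hsP has =>
    hsplit s hs hsP (by rw [(disjoint_compl_left_iff.2 has).eq_bot]; exact L.bot_mem)
  obtain ⟨Q₂, hQ₂, hacQ₂, hQ₂L⟩ := hP.exists_isPrime_inter_eq L fun s hs hsP has =>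
    hsplit s hs hsP (by rw [inf_eq_left.2 (compl_le_iff_compl_le.1 has)]; exact L.compl_mem hs)
  refine ⟨hQ₁.toBoundedLatticeHom, hQ₂.toBoundedLatticeHom, fun x hx => ?_, fun h => ?_⟩
  · ext
    simp [hQ₁L x hx, hQ₂L x hx]
  · have h' := Set.ext_iff.1 h PUnit.unit
    simp only [Ideal.IsPrime.mem_toBoundedLatticeHom] at h'
    exact h'.1 haQ₁ (hQ₂.mem_or_compl_mem.resolve_right hacQ₂)

end PrimeIdeal

namespace BooleanSubalgebra

variable {α : Type*} [BooleanAlgebra α] {s : Set α}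

theorem finite_closure (hs : s.Finite) : (closure s : Set α).Finite := by
  set t := latticeClosure (insert ⊥ (insert ⊤ s))
  have ht : t.Finite := ((hs.insert ⊤).insert ⊥).latticeClosure
  have : Finite t := ht.to_subtype
  have hbot : ⊥ ∈ t := subset_latticeClosure (Set.mem_insert _ _)
  have htop : ⊤ ∈ t := subset_latticeClosure (Set.mem_insert_of_mem _ (Set.mem_insert _ _))
  refine (Set.finite_range fun u : Finset (t × t) => u.sup fun x => x.1.1 \ x.2.1).subset ?_
  intro x hx
  have hst : s ⊆ t := fun y hy => subset_latticeClosure (by simp [hy])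
  obtain ⟨u, rfl⟩ :=
    (mem_closure_iff_sup_sdiff isSublattice_latticeClosure hbot htop).1 (closure_mono hst hx)
  exact ⟨u, rfl⟩

theorem exists_finset_of_mem_closure {x : α} (hx : x ∈ closure s) :
    ∃ t : Finset s, x ∈ closure (Subtype.val '' (t : Set s)) := by
  classical
  induction hx using closure_bot_sup_induction with
  | mem x hx => exact ⟨{⟨x, hx⟩}, subset_closure (by simp)⟩
  | bot => exact ⟨∅, bot_mem⟩
  | sup x _ y _ hx hy =>
    obtain ⟨t₁, ht₁⟩ := hx
    obtain ⟨t₂, ht₂⟩ := hy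
    refine ⟨t₁ ∪ t₂, sup_mem ?_ ?_⟩
    · exact closure_mono (Set.image_mono (by simp)) ht₁
    · exact closure_mono (Set.image_mono (by simp)) ht₂
  | compl x _ hx =>
    obtain ⟨t, ht⟩ := hx
    exact ⟨t, compl_mem ht⟩

theorem mk_closure_le (hs : ℵ₀ ≤ #s) : #(closure s) ≤ #s := by
  have : Infinite s := infinite_iff.2 hs
  calc #(closure s)
      ≤ #(⋃ t : Finset s, (closure (Subtype.val '' (t : Set s)) : Set α)) :=
        mk_le_mk_of_subset fun x hx => Set.mem_iUnion.2 (exists_finset_of_mem_closure hx)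
    _ ≤ #(Finset s) * ⨆ t : Finset s, #(closure (Subtype.val '' (t : Set s))) := mk_iUnion_le _
    _ ≤ #s * ℵ₀ := by
        rw [mk_finset_of_infinite]
        exact mul_le_mul_right (ciSup_le' fun t =>
          (finite_closure (t.finite_toSet.image _)).lt_aleph0.le) _
    _ = #s := mul_aleph0_eq hs

theorem mk_le_of_closure_eq_top [Infinite α] (hs : closure s = ⊤) : #α ≤ #s := by
  have hα : #α = #(closure s) := by rw [hs]; exact (mk_univ).symm
  have hsinf : s.Infinite := fun hfin =>
    Set.infinite_univ (α := α) (by simpa [hs] using finite_closure hfin)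
  exact hα.trans_le (mk_closure_le (infinite_iff.1 hsinf.to_subtype))

theorem closure_diff_bot (s : Set α) : closure (s \ {⊥}) = closure s := by
  refine le_antisymm (closure_mono Set.sdiff_subset) (closure_le.2 fun x hx => ?_)
  obtain rfl | hne := eq_or_ne x ⊥
  · exact bot_mem
  · exact subset_closure ⟨hx, hne⟩

end BooleanSubalgebra

theorem omegaPreserving_ite_eq {α : Type u} {β : Type v} [BooleanAlgebra α] [BooleanAlgebra β]
    [DecidableEq α] (X : Set α) {g₀ : α} (hg₀ : g₀ ≠ ⊥) :
    OmegaPreserving X fun x => if x = g₀ then (⊤ : β) else ⊥ := by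
  intro H _ hH
  obtain ⟨x, hx, hxg₀⟩ : ∃ x ∈ H, x ≠ g₀ := by
    by_contra! hall
    exact hg₀ (le_bot_iff.1 (hH ▸ Finset.le_inf fun y hy => (hall y hy).ge))
  exact le_bot_iff.1 ((Finset.inf_le hx).trans_eq (if_neg hxg₀))

namespace OmegaFree

variable {α : Type u} [BooleanAlgebra α] {G : Set α}

theorem hom_ext (h : OmegaFree.{u, v} G) {β : Type v} [BooleanAlgebra β] [Nontrivial β]
    {f g : BoundedLatticeHom α β} (hfg : Set.EqOn f g G) : f = g := by
  have hf : OmegaPreserving G f := fun H _ hH => by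
    rw [← map_bot f, ← hH, map_finset_inf f H id]
    rfl
  obtain ⟨_, -, huniq⟩ := h β f hf
  exact (huniq f fun _ _ => rfl).trans (huniq g fun x hx => (hfg hx).symm).symm

theorem closure_eq_top (h : OmegaFree.{u, v} G) : BooleanSubalgebra.closure G = ⊤ := by
  by_contra hne
  obtain ⟨a, -, ha⟩ := SetLike.exists_of_lt (lt_top_iff_ne_top.2 hne)
  obtain ⟨f, g, hfg, hne⟩ := BooleanSubalgebra.exists_hom_ne_of_notMem.{v} ha
  exact hne (congrFun (congrArg DFunLike.coe
    (h.hom_ext fun x hx => hfg x (BooleanSubalgebra.subset_closure hx))) a)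

theorem mk_le_mk_diff_bot [Infinite α] (h : OmegaFree.{u, v} G) : #α ≤ #(G \ {⊥} : Set α) :=
  BooleanSubalgebra.mk_le_of_closure_eq_top <| by
    rw [BooleanSubalgebra.closure_diff_bot, h.closure_eq_top]

theorem exists_hom_mem_iff (h : OmegaFree.{u, v} G) {g₀ : α} (hg₀ : g₀ ≠ ⊥) :
    ∃ u : BoundedLatticeHom α (Set PUnit.{v + 1}), ∀ x ∈ G, PUnit.unit ∈ u x ↔ x = g₀ := by
  classical
  obtain ⟨u, hu, -⟩ := h (Set PUnit.{v + 1}) _ (omegaPreserving_ite_eq G hg₀)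
  refine ⟨u, fun x hx => ?_⟩
  rw [hu x hx]
  split_ifs with hx <;> simp [hx]

end OmegaFree

section Ultrafilter

open Filter

variable {W : Type*}

def Ultrafilter.toBoundedLatticeHom (U : Ultrafilter W) :
    BoundedLatticeHom (Set W) (Set PUnit.{v + 1}) where
  toFun s := {_u | s ∈ U}
  map_sup' _ _ := Set.ext fun _ => Ultrafilter.union_mem_iff
  map_inf' _ _ := Set.ext fun _ => Filter.inter_mem_iff
  map_top' := Set.ext fun _ => iff_true_intro Filter.univ_mem
  map_bot' := Set.ext fun _ => iff_false_intro U.empty_notMem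

theorem Set.finite_or_finite_compl_of_ultrafilter {s : Set W}
    (h : ∀ U₁ U₂ : Ultrafilter W, (U₁ : Filter W) ≤ cofinite → (U₂ : Filter W) ≤ cofinite →
      s ∈ U₁ → s ∈ U₂) :
    s.Finite ∨ sᶜ.Finite := by
  by_cases hs : ∃ U : Ultrafilter W, (U : Filter W) ≤ cofinite ∧ s ∈ U
  · obtain ⟨U₁, hU₁, hsU₁⟩ := hs
    exact Or.inr (mem_cofinite.1 (mem_iff_ultrafilter.2 fun U₂ hU₂ => h U₁ U₂ hU₁ hU₂ hsU₁))
  · have hsc : sᶜ ∈ cofinite := mem_iff_ultrafilter.2 fun U hU =>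
      Ultrafilter.compl_mem_iff_notMem.2 fun hsU => hs ⟨U, hU, hsU⟩
    exact Or.inl (by simpa using mem_cofinite.1 hsc)

def BoundedLatticeHom.setOfFamily {α : Type*} [BooleanAlgebra α]
    (u : W → BoundedLatticeHom α (Set PUnit.{v + 1})) : BoundedLatticeHom α (Set W) where
  toFun a := {w | PUnit.unit ∈ u w a}
  map_sup' _ _ := Set.ext fun _ => by simp
  map_inf' _ _ := Set.ext fun _ => by simp
  map_top' := Set.ext fun _ => by simp
  map_bot' := Set.ext fun _ => by simp

end Ultrafilter

theorem OmegaFree.finite_or_finite_compl {α : Type u} [BooleanAlgebra α] {G : Set α}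
    (h : OmegaFree.{u, v} G) {W : Type*} (F : BoundedLatticeHom α (Set W))
    (hF : ∀ x ∈ G, (F x).Finite) (a : α) : (F a).Finite ∨ (F a)ᶜ.Finite := by
  have hG : ∀ U : Ultrafilter W, ↑U ≤ Filter.cofinite → ∀ x ∈ G,
      (U.toBoundedLatticeHom.{v}.comp F) x = ⊥ := fun U hU x hx =>
    Set.ext fun _ =>
      iff_false_intro (Ultrafilter.compl_mem_iff_notMem.1 (hU (hF x hx).compl_mem_cofinite))
  refine Set.finite_or_finite_compl_of_ultrafilter fun U₁ U₂ hU₁ hU₂ hU₁a => ?_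
  have heq := h.hom_ext fun x hx => (hG U₁ hU₁ x hx).trans (hG U₂ hU₂ x hx).symm
  exact (Set.ext_iff.1 (congrFun (congrArg DFunLike.coe heq) a) PUnit.unit).1 hU₁a

namespace FinCo

variable {α : Type*} [BooleanAlgebra α] {W : Type*}

def codRestrict (f : BoundedLatticeHom α (Set W)) (hf : ∀ a, (f a).Finite ∨ (f a)ᶜ.Finite) :
    BoundedLatticeHom α (FinCo W) where
  toFun a := ⟨f a, hf a⟩
  map_sup' a b := Subtype.ext (map_sup f a b)
  map_inf' a b := Subtype.ext (map_inf f a b)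
  map_top' := Subtype.ext (map_top f)
  map_bot' := Subtype.ext (map_bot f)

theorem codRestrict_surjective {f : BoundedLatticeHom α (Set W)}
    (hf : ∀ a, (f a).Finite ∨ (f a)ᶜ.Finite) (hsingleton : ∀ w, {w} ∈ Set.range f) :
    Function.Surjective (codRestrict f hf) := by
  have hfinite : ∀ s : Set W, s.Finite → s ∈ Set.range f := fun s hs => by
    induction s, hs using Set.Finite.induction_on with
    | empty => exact ⟨⊥, map_bot f⟩
    | @insert w s _ _ ih =>
      obtain ⟨a, ha⟩ := ih
      obtain ⟨b, hb⟩ := hsingleton w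
      exact ⟨b ⊔ a, by rw [map_sup, ha, hb, Set.insert_eq]; rfl⟩
  rintro ⟨s, hs | hs⟩
  · obtain ⟨a, ha⟩ := hfinite s hs
    exact ⟨a, Subtype.ext ha⟩
  · obtain ⟨a, ha⟩ := hfinite sᶜ hs
    exact ⟨aᶜ, Subtype.ext ((map_compl f a).trans (by rw [ha, compl_compl]))⟩

end FinCo

/-- If `A` is an infinite Boolean algebra, ω-free over some `G ⊆ A`, and `W` has the same
cardinality as `A`, then the finite–cofinite algebra on `W` is a homomorphic image of
`A`. -/
theorem finCo_homomorphic_image_of_omegaFree {α : Type u} [BooleanAlgebra α] [Infinite α]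
    (G : Set α) (h : OmegaFree.{u, v} G)
    (W : Type u) (hW : Cardinal.mk W = Cardinal.mk α) :
    ∃ f : BoundedLatticeHom α (FinCo W), Function.Surjective f := by
  obtain ⟨e⟩ : Nonempty (W ↪ (G \ {⊥} : Set α)) := (le_def _ _).1 (hW ▸ h.mk_le_mk_diff_bot)
  choose u hu using fun w => h.exists_hom_mem_iff (e w).2.2
  set F := BoundedLatticeHom.setOfFamily u
  have hF : ∀ x ∈ G, F x = {w | x = e w} := fun x hx => Set.ext fun w => hu w x hx
  have hFfin : ∀ x ∈ G, (F x).Finite := fun x hx => by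
    rw [hF x hx]
    exact Set.Subsingleton.finite fun w₁ hw₁ w₂ hw₂ =>
      e.injective (Subtype.ext (hw₁.symm.trans hw₂))
  have hFsingleton : ∀ w, {w} ∈ Set.range F := fun w => by
    refine ⟨e w, (hF _ (e w).2.1).trans (Set.ext fun w' => ?_)⟩
    simp [Subtype.ext_iff.symm, eq_comm]
  exact ⟨FinCo.codRestrict F (h.finite_or_finite_compl F hFfin),
    FinCo.codRestrict_surjective _ hFsingleton⟩
end

section
/- Let A be a Boolean algebra and let X ⊆ A be a nonempty ideal-independent subset that is maximal among ideal-independent subsets of A (no ideal-independent subset of A properly contains X). Then the only upper bound of X in A is 1; that is, if b ∈ A satisfies x ≤ b for all x ∈ X, then b = 1 (so sup X = 1). -/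
universe u

/-- `X` is ideal-independent: `⊥ ∉ X`, `⊤ ∉ X`, and no `x ∈ X` lies below the supremum
of a nonempty finite subset of `X \ {x}`. -/
def IdealIndependent {α : Type u} [BooleanAlgebra α] (X : Set α) : Prop :=
  ⊥ ∉ X ∧ ⊤ ∉ X ∧
    ∀ x ∈ X, ∀ F : Finset α, ↑F ⊆ X \ {x} → F.Nonempty → ¬ x ≤ F.sup id

/-- If `X` is a nonempty ideal-independent set that is maximal among ideal-independent
subsets of `A`, then the only upper bound of `X` is `⊤` (so `sup X = ⊤`). -/
theorem maximal_idealIndependent_sup_top {α : Type u} [BooleanAlgebra α]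
    (X : Set α) (hne : X.Nonempty) (hX : IdealIndependent X)
    (hmax : ∀ Y : Set α, IdealIndependent Y → X ⊆ Y → Y = X)
    (b : α) (hb : ∀ x ∈ X, x ≤ b) : b = ⊤ := by
  classical
  by_contra hbtop
  obtain ⟨hbot, htop, hind⟩ := hX
  have hc : bᶜ ≠ ⊥ := by
    intro h
    apply hbtop
    have := congrArg compl h
    simpa using this
  have hcnotX : bᶜ ∉ X := by
    intro h
    have : bᶜ ≤ b := hb _ h
    have : bᶜ ≤ ⊥ := le_inf this le_rfl |>.trans (by simp)
    exact hc (le_bot_iff.mp this)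
  set Y := insert bᶜ X with hY
  have hYind : IdealIndependent Y := by
    refine ⟨?_, ?_, ?_⟩
    · intro h
      rcases h with h | h
      · exact hc h.symm
      · exact hbot h
    · intro h
      rcases h with h | h
      · -- bᶜ = ⊤ means b = ⊥, then any x ∈ X is ⊥
        obtain ⟨x, hx⟩ := hne
        have hbbot : b = ⊥ := by
          have := congrArg compl h
          simpa using this.symm
        have : x ≤ ⊥ := hbbot ▸ hb x hx
        exact hbot (le_bot_iff.mp this ▸ hx)
      · exact htop h
    · intro x hx F hF hFne hle
      rcases hx with hxc | hxX
      · -- x = bᶜ, F ⊆ Y \ {bᶜ} ⊆ X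
        subst hxc
        have hsub : ↑F ⊆ X := by
          intro f hf
          have := hF hf
          rcases this.1 with h | h
          · exact absurd h this.2
          · exact h
        have : F.sup id ≤ b := Finset.sup_le fun f hf => hb f (hsub hf)
        have h1 : bᶜ ≤ b := hle.trans this
        have : bᶜ ≤ ⊥ := le_inf h1 le_rfl |>.trans (by simp)
        exact hc (le_bot_iff.mp this)
      · -- x ∈ X
        set F' := F.erase bᶜ with hF'
        have hFle : F.sup id ≤ F'.sup id ⊔ bᶜ := by
          apply Finset.sup_le
          intro f hf
          by_cases hfc : f = bᶜ
          · exact hfc ▸ le_sup_right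
          · exact le_sup_left.trans' (Finset.le_sup (f := id) (Finset.mem_erase.mpr ⟨hfc, hf⟩))
        have hxb : x ≤ b := hb x hxX
        have hxF' : x ≤ F'.sup id := by
          have h1 : x ≤ (F'.sup id ⊔ bᶜ) ⊓ b := le_inf (hle.trans hFle) hxb
          calc x ≤ (F'.sup id ⊔ bᶜ) ⊓ b := h1
            _ = F'.sup id ⊓ b ⊔ bᶜ ⊓ b := by rw [inf_sup_right]
            _ ≤ F'.sup id ⊔ ⊥ := sup_le_sup inf_le_left (by simp)
            _ = F'.sup id := by simp
        have hF'sub : ↑F' ⊆ X \ {x} := by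
          intro f hf
          have hfF : f ∈ F := Finset.mem_of_mem_erase hf
          have hfc : f ≠ bᶜ := (Finset.mem_erase.mp hf).1
          have := hF hfF
          rcases this.1 with h | h
          · exact absurd h hfc
          · exact ⟨h, this.2⟩
        rcases F'.eq_empty_or_nonempty with h | h
        · rw [h] at hxF'
          simp only [Finset.sup_empty, le_bot_iff] at hxF'
          exact hbot (hxF' ▸ hxX)
        · exact hind x hxX F' hF'sub h hxF'
  have := hmax Y hYind (Set.subset_insert _ _)
  exact hcnotX (this ▸ Set.mem_insert bᶜ X)
end

section
/- Let A be a Boolean algebra and F ⊆ A a subset whose cardinality is an uncountable regular cardinal, and suppose F is moderate in itself: for every g ∈ F, the norm ‖g‖_F = {f ∈ F : 0 < g ⊓ f < f} is finite. Then F has a subset G with the same cardinality as F that is pairwise incomparable: for all distinct f, g ∈ G, neither f ≤ g nor g ≤ f. -/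
universe u

open Cardinal

/-- The norm of `a` with respect to `F`: the set of `f ∈ F` split by `a`. -/
def norm {α : Type u} [BooleanAlgebra α] (F : Set α) (a : α) : Set α :=
  {f ∈ F | ⊥ < a ⊓ f ∧ a ⊓ f < f}

/-- `F` is moderate in itself: the norm `‖g‖_F` is finite for every `g ∈ F`. -/
def ModerateInItself {α : Type u} [BooleanAlgebra α] (F : Set α) : Prop :=
  ∀ g ∈ F, (norm F g).Finite

/-!
A nonzero `x ∈ F` splits every strictly larger element of `F`, so when `F` is moderate in itself
each nonzero element of `F` has only finitely many strict upper bounds in `F`. The number of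
these upper bounds strictly decreases along `<`, so its fibres are antichains. There are only
countably many fibres, and a regular uncountable cardinal is not a countable union of smaller
ones, so some fibre is as large as `F`.
-/

theorem Cardinal.mk_le_mk_sdiff_singleton {α : Type*} {S : Set α} (hS : ℵ₀ ≤ #S) (a : α) :
    #S ≤ #(S \ {a} : Set α) := by
  have h := le_mk_sdiff_add_mk S {a}
  rw [mk_singleton] at h
  rcases lt_or_ge #(S \ {a} : Set α) ℵ₀ with hlt | hle
  · exact absurd (h.trans_lt (add_lt_aleph0 hlt one_lt_aleph0)) hS.not_gt
  · rwa [add_one_of_aleph0_le hle] at h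

section StrictUpperBounds

variable {α : Type u}

theorem ncard_strictUpper_lt_of_lt [Preorder α] {s : Set α} {a b : α} (hab : a < b)
    (hb : b ∈ s) (ha : {y ∈ s | a < y}.Finite) :
    {y ∈ s | b < y}.ncard < {y ∈ s | a < y}.ncard :=
  Set.ncard_lt_ncard
    ⟨fun _ hy => ⟨hy.1, hab.trans hy.2⟩, fun h => lt_irrefl b (h ⟨hb, hab⟩).2⟩ ha

theorem isAntichain_of_ncard_strictUpper_eq [PartialOrder α] {s t : Set α} (hts : t ⊆ s)
    (hfin : ∀ x ∈ s, {y ∈ s | x < y}.Finite) {n : ℕ}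
    (hn : ∀ x ∈ t, {y ∈ s | x < y}.ncard = n) :
    IsAntichain (· ≤ ·) t := by
  intro a ha b hb hne hab
  have hlt := ncard_strictUpper_lt_of_lt (lt_of_le_of_ne hab hne) (hts hb) (hfin a (hts ha))
  rw [hn a ha, hn b hb] at hlt
  exact lt_irrefl n hlt

theorem exists_isAntichain_le_mk_of_finite_strictUpper [PartialOrder α] {s : Set α}
    (hfin : ∀ x ∈ s, {y ∈ s | x < y}.Finite) {θ : Cardinal.{u}} (hθ : θ ≤ #s)
    (hcof : ℵ₀ < θ.ord.cof) :
    ∃ t ⊆ s, θ ≤ #t ∧ IsAntichain (· ≤ ·) t := by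
  obtain ⟨n, t, hts, hθt, hn⟩ := infinite_pigeonhole_set
    (fun x : s => ULift.up.{u} {y ∈ s | x.1 < y}.ncard) θ hθ
    (hcof.le.trans (Ordinal.cof_ord_le θ)) (by simpa using hcof)
  exact ⟨t, hts, hθt, isAntichain_of_ncard_strictUpper_eq hts hfin
    (n := n.down) fun x hx => congrArg ULift.down (hn hx)⟩

end StrictUpperBounds

theorem strictUpper_subset_norm {α : Type u} [BooleanAlgebra α] (F : Set α) {x : α}
    (hx : x ≠ ⊥) : {g ∈ F | x < g} ⊆ norm F x := by
  rintro g ⟨hgF, hxg⟩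
  refine ⟨hgF, ?_, ?_⟩ <;> rw [inf_eq_left.2 hxg.le]
  · exact bot_lt_iff_ne_bot.2 hx
  · exact hxg

theorem ModerateInItself.finite_strictUpper {α : Type u} [BooleanAlgebra α] {F : Set α}
    (hmod : ModerateInItself F) : ∀ x ∈ F \ {⊥}, {g ∈ F \ {⊥} | x < g}.Finite :=
  fun x ⟨hxF, hx⟩ => (hmod x hxF).subset fun _ hg =>
    strictUpper_subset_norm F hx ⟨hg.1.1, hg.2⟩

/-- If `F` is moderate in itself and `|F|` is an uncountable regular cardinal, then `F`
has a pairwise incomparable subset of the same cardinality. -/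
theorem moderate_incomparable_subset {α : Type u} [BooleanAlgebra α] (F : Set α)
    (hreg : (Cardinal.mk F).IsRegular) (hunc : Cardinal.aleph0 < Cardinal.mk F)
    (hmod : ModerateInItself F) :
    ∃ G ⊆ F, Cardinal.mk G = Cardinal.mk F ∧
      ∀ f ∈ G, ∀ g ∈ G, f ≠ g → ¬ f ≤ g ∧ ¬ g ≤ f := by
  obtain ⟨G, hGs, hFG, hanti⟩ := exists_isAntichain_le_mk_of_finite_strictUpper
    hmod.finite_strictUpper (mk_le_mk_sdiff_singleton hunc.le ⊥) (by rwa [hreg.cof_ord])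
  have hGF : G ⊆ F := hGs.trans Set.sdiff_subset
  exact ⟨G, hGF, le_antisymm (mk_le_mk_of_subset hGF) hFG,
    fun f hf g hg hne => ⟨hanti hf hg hne, hanti hg hf hne.symm⟩⟩
end
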